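/- arXiv:1504.05705 — 9 statements merged into one kernel-verified Lean document; each statement's English description precedes it below -/
import Mathlib

section
/- Under assumptions (g1)–(g4) on the numerical Hamiltonian g, if F : ℝ≥0 → ℝ is continuous and nondecreasing, then for any grid initial data u⁰ and terminal data m^{N_T} ∈ 𝒦_h, the discrete mean field games system — for all 0 ≤ i,j < N_h and 0 ≤ k < N_T: (u^{k+1}_{i,j} − u^k_{i,j})/Δt − ν(Δ_h u^{k+1})_{i,j} + g(x_{i,j}, [∇_h u^{k+1}]_{i,j}) = F(m^k_{i,j}) and (m^{k+1}_{i,j} − m^k_{i,j})/Δt + ν(Δ_h m^k)_{i,j} + 𝒯_{i,j}(u^{k+1}, m^k) = 0, with m^k ∈ 𝒦_h for all k — has at most one solution: any two solutions ((u^n),(m^n)) and ((ũ^n),(m̃^n)) coincide. -/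
open Finset

noncomputable section

abbrev Torus : Type := AddCircle (1:ℝ) × AddCircle (1:ℝ)

/-- The grid step `h = 1/N_h`. -/
def gridh (N : ℕ) : ℝ := 1 / N

/-- The grid point `x_{i,j} = (ih, jh)` on the torus. -/
def gridPt (N : ℕ) (i j : ZMod N) : Torus :=
  (((i.val : ℝ) * gridh N : ℝ), ((j.val : ℝ) * gridh N : ℝ))

/-- Forward difference in the first direction. -/
def D1 {N : ℕ} (v : ZMod N → ZMod N → ℝ) (i j : ZMod N) : ℝ :=
  (v (i + 1) j - v i j) / gridh N

/-- Forward difference in the second direction. -/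
def D2 {N : ℕ} (v : ZMod N → ZMod N → ℝ) (i j : ZMod N) : ℝ :=
  (v i (j + 1) - v i j) / gridh N

/-- `[∇_h v]_{i,j} ∈ ℝ⁴`. -/
def nablah {N : ℕ} (v : ZMod N → ZMod N → ℝ) (i j : ZMod N) : Fin 4 → ℝ :=
  ![D1 v i j, D1 v (i - 1) j, D2 v i j, D2 v i (j - 1)]

/-- The five-point discrete Laplacian. -/
def laph {N : ℕ} (v : ZMod N → ZMod N → ℝ) (i j : ZMod N) : ℝ :=
  -(4 * v i j - v (i + 1) j - v (i - 1) j - v i (j + 1) - v i (j - 1)) / (gridh N) ^ 2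

/-- Scalar product on ℝ⁴. -/
def dot4 (p q : Fin 4 → ℝ) : ℝ := p 0 * q 0 + p 1 * q 1 + p 2 * q 2 + p 3 * q 3

/-- Euclidean norm on ℝ⁴. -/
def norm4 (p : Fin 4 → ℝ) : ℝ := Real.sqrt (dot4 p p)

/-- The discrete transport operator `𝒯_{i,j}(u,m)`. -/
def Transp {N : ℕ} (gq : Torus → (Fin 4 → ℝ) → (Fin 4 → ℝ))
    (u m : ZMod N → ZMod N → ℝ) (i j : ZMod N) : ℝ :=
  (1 / gridh N) *
    ((m i j * gq (gridPt N i j) (nablah u i j) 0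
        - m (i - 1) j * gq (gridPt N (i - 1) j) (nablah u (i - 1) j) 0
        + m (i + 1) j * gq (gridPt N (i + 1) j) (nablah u (i + 1) j) 1
        - m i j * gq (gridPt N i j) (nablah u i j) 1)
      + (m i j * gq (gridPt N i j) (nablah u i j) 2
        - m i (j - 1) * gq (gridPt N i (j - 1)) (nablah u i (j - 1)) 2
        + m i (j + 1) * gq (gridPt N i (j + 1)) (nablah u i (j + 1)) 3
        - m i j * gq (gridPt N i j) (nablah u i j) 3))

/-- Membership in the set `𝒦_h` of discrete probability densities. -/
def inKh {N : ℕ} [NeZero N] (m : ZMod N → ZMod N → ℝ) : Prop :=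
  (∀ i j, 0 ≤ m i j) ∧ (gridh N) ^ 2 * ∑ i, ∑ j, m i j = 1

/-- (g1): monotonicity of the numerical Hamiltonian. -/
def Hg1 (g : Torus → (Fin 4 → ℝ) → ℝ) : Prop :=
  ∀ x (q : Fin 4 → ℝ) (s t : ℝ), s ≤ t →
    g x (Function.update q 0 t) ≤ g x (Function.update q 0 s) ∧
    g x (Function.update q 2 t) ≤ g x (Function.update q 2 s) ∧
    g x (Function.update q 1 s) ≤ g x (Function.update q 1 t) ∧
    g x (Function.update q 3 s) ≤ g x (Function.update q 3 t)

/-- (g2): consistency with the Hamiltonian `H`. -/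
def Hg2 (g : Torus → (Fin 4 → ℝ) → ℝ) (H : Torus → ℝ × ℝ → ℝ) : Prop :=
  ∀ x (q1 q2 : ℝ), g x ![q1, q1, q2, q2] = H x (q1, q2)

/-- (g3): regularity; `g` is continuous and C¹ w.r.t. `q`, with `q`-gradient `gq`. -/
def Hg3 (g : Torus → (Fin 4 → ℝ) → ℝ) (gq : Torus → (Fin 4 → ℝ) → (Fin 4 → ℝ)) : Prop :=
  Continuous (fun p : Torus × (Fin 4 → ℝ) => g p.1 p.2) ∧
  (∀ x, ContDiff ℝ 1 (g x)) ∧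
  (∀ x (q : Fin 4 → ℝ) (i : Fin 4),
      HasDerivAt (fun t => g x (Function.update q i t)) (gq x q i) (q i))

/-- (g4): convexity of `q ↦ g(x,q)`. -/
def Hg4 (g : Torus → (Fin 4 → ℝ) → ℝ) : Prop :=
  ∀ x, ConvexOn ℝ Set.univ (g x)

/-- (g5): the growth conditions. -/
def Hg5 (g : Torus → (Fin 4 → ℝ) → ℝ) (gq : Torus → (Fin 4 → ℝ) → (Fin 4 → ℝ)) : Prop :=
  ∃ c1 c2 c3 c4 : ℝ, 0 < c1 ∧ 0 < c2 ∧ 0 < c3 ∧ 0 < c4 ∧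
    ∀ x q, c1 * (norm4 (gq x q)) ^ 2 - c2 ≤ dot4 (gq x q) q - g x q ∧
      norm4 (gq x q) ≤ c3 * norm4 q + c4

/-- The discrete Bellman equations. -/
def BellmanEq {N : ℕ} (g : Torus → (Fin 4 → ℝ) → ℝ) (ν Δt : ℝ) (F : ℝ → ℝ)
    (u m : ℕ → ZMod N → ZMod N → ℝ) (NT : ℕ) : Prop :=
  ∀ k < NT, ∀ i j, (u (k + 1) i j - u k i j) / Δt - ν * laph (u (k + 1)) i j
    + g (gridPt N i j) (nablah (u (k + 1)) i j) = F (m k i j)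

/-- The discrete Fokker–Planck equations. -/
def FPEq {N : ℕ} (gq : Torus → (Fin 4 → ℝ) → (Fin 4 → ℝ)) (ν Δt : ℝ)
    (u m : ℕ → ZMod N → ZMod N → ℝ) (NT : ℕ) : Prop :=
  ∀ k < NT, ∀ i j, (m (k + 1) i j - m k i j) / Δt + ν * laph (m k) i j
    + Transp gq (u (k + 1)) (m k) i j = 0

/-!
Lasry–Lions monotonicity argument. Pair the difference of the two Bellman equations with
`m - m'` and the difference of the two Fokker–Planck equations with `u - u'`. Summation by
parts on the torus (`Δ_h` is symmetric and `𝒯(u, ·)` is minus the adjoint of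
`m ↦ m g_q(x, ∇_h u) · ∇_h`) turns the pairings `⟨u^k - u'^k, m^k - m'^k⟩` into a telescoping
sum. These pairings vanish at `k = 0` and `k = N_T`, so the sum over `k` of
`⟨F(m^k) - F(m'^k), m^k - m'^k⟩ ≥ 0` equals a sum of Hamiltonian terms that are `≤ 0` by
convexity of `g` and `m, m' ≥ 0`. Hence `F(m^k) = F(m'^k)`.
The two Bellman equations then coincide. Comparing them at a maximum of `u^{k+1} - u'^{k+1}`,
using convexity of `g` and the signs of `g_q` forced by (g1), gives `u = u'` by induction
forward in time.
Finally `m^k - m'^k` solves an implicit Fokker–Planck step with zero data. This step is the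
adjoint of a linearised Bellman step, which is injective by the maximum principle and hence
surjective, so `m = m'` by induction backward in time.
-/

open Function

theorem ConvexOn.add_le_of_hasFDerivAt {E : Type*} [NormedAddCommGroup E] [NormedSpace ℝ E]
    {f : E → ℝ} {f' : E →L[ℝ] ℝ} {x : E} (hf : ConvexOn ℝ Set.univ f)
    (hf' : HasFDerivAt f f' x) (y : E) : f x + f' (y - x) ≤ f y := by
  let ℓ := AffineMap.lineMap (k := ℝ) x y
  have hderiv : HasDerivAt (f ∘ ℓ) (f' (y - x)) 0 := by
    refine HasFDerivAt.comp_hasDerivAt (0 : ℝ) ?_ AffineMap.hasDerivAt_lineMap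
    simpa [ℓ] using hf'
  have hslope := (hf.comp_affineMap ℓ).le_slope_of_hasDerivAt (Set.mem_univ 0)
    (Set.mem_univ 1) one_pos hderiv
  simp only [slope_def_field, comp_apply, ℓ, AffineMap.lineMap_apply_zero,
    AffineMap.lineMap_apply_one, sub_zero, div_one] at hslope
  linarith

theorem HasFDerivAt.apply_eq_sum_of_hasDerivAt_update {ι : Type*} [Fintype ι] [DecidableEq ι]
    {f : (ι → ℝ) → ℝ} {f' : (ι → ℝ) →L[ℝ] ℝ} {x v : ι → ℝ} (hf : HasFDerivAt f f' x)
    (hpart : ∀ i, HasDerivAt (fun t => f (update x i t)) (v i) (x i)) (p : ι → ℝ) :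
    f' p = ∑ i, v i * p i := by
  have hsingle : ∀ i, f' (Pi.single i 1) = v i := fun i =>
    ((update_eq_self i x ▸ hf).comp_hasDerivAt (x i) (hasDerivAt_update x i (x i))).unique
      (hpart i)
  conv_lhs => rw [← univ_sum_single p]
  simp only [map_sum]
  refine sum_congr rfl fun i _ => ?_
  rw [← hsingle, mul_comm, ← smul_eq_mul, ← map_smul, ← Pi.single_smul, smul_eq_mul, mul_one]

theorem sum_sum_eq_zero_iff_of_nonneg {ι κ M : Type*} [Fintype ι] [Fintype κ] [AddCommMonoid M]
    [PartialOrder M] [AddLeftMono M] {f : ι → κ → M} (hf : 0 ≤ f) :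
    ∑ i, ∑ j, f i j = 0 ↔ f = 0 := by
  rw [Fintype.sum_eq_zero_iff_of_nonneg fun i => Fintype.sum_nonneg (hf i)]
  simp only [funext_iff, Pi.zero_apply, Fintype.sum_eq_zero_iff_of_nonneg (hf _)]

theorem sum_sum_shift_sub_add_shift_sub {G M : Type*} [AddGroup G] [Fintype G]
    [AddCommGroup M] (φ ψ : G → G → M) (a b : G) :
    ∑ i, ∑ j, (φ (i + a) j - φ i j + (ψ i (j + b) - ψ i j)) = 0 := by
  have hφ : ∑ i, ∑ j, φ (i + a) j = ∑ i, ∑ j, φ i j :=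
    Fintype.sum_equiv (Equiv.addRight a) _ _ fun _ => rfl
  have hψ : ∑ i, ∑ j, ψ i (j + b) = ∑ i, ∑ j, ψ i j := by
    rw [sum_comm]
    exact (Fintype.sum_equiv (Equiv.addRight b) _ (fun j => ∑ i, ψ i j) fun _ => rfl).trans
      sum_comm
  simp only [sum_add_distrib, sum_sub_distrib, hφ, hψ, sub_self, add_zero]

def UpwindSigns (p : Fin 4 → ℝ) : Prop := p 0 ≤ 0 ∧ 0 ≤ p 1 ∧ p 2 ≤ 0 ∧ 0 ≤ p 3

theorem UpwindSigns.dot4_nonneg {p q : Fin 4 → ℝ} (hp : UpwindSigns p) (hq : UpwindSigns q) :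
    0 ≤ dot4 p q := by
  obtain ⟨hp0, hp1, hp2, hp3⟩ := hp
  obtain ⟨hq0, hq1, hq2, hq3⟩ := hq
  unfold dot4
  have := mul_nonneg_of_nonpos_of_nonpos hp0 hq0
  have := mul_nonneg hp1 hq1
  have := mul_nonneg_of_nonpos_of_nonpos hp2 hq2
  have := mul_nonneg hp3 hq3
  linarith

theorem dot4_eq_sum (p q : Fin 4 → ℝ) : dot4 p q = ∑ i, p i * q i := by
  rw [Fin.sum_univ_four]; rfl

section Hamiltonian

variable {g : Torus → (Fin 4 → ℝ) → ℝ} {gq : Torus → (Fin 4 → ℝ) → (Fin 4 → ℝ)}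

theorem Hg1.upwindSigns (hg1 : Hg1 g) (hg3 : Hg3 g gq) (x : Torus) (q : Fin 4 → ℝ) :
    UpwindSigns (gq x q) :=
  ⟨(hg3.2.2 x q 0).nonpos_of_antitone fun _ _ h => (hg1 x q _ _ h).1,
    (hg3.2.2 x q 1).nonneg_of_monotone fun _ _ h => (hg1 x q _ _ h).2.2.1,
    (hg3.2.2 x q 2).nonpos_of_antitone fun _ _ h => (hg1 x q _ _ h).2.1,
    (hg3.2.2 x q 3).nonneg_of_monotone fun _ _ h => (hg1 x q _ _ h).2.2.2⟩

theorem Hg3.add_dot4_le (hg3 : Hg3 g gq) (hg4 : Hg4 g) (x : Torus) (q q' : Fin 4 → ℝ) :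
    g x q + dot4 (gq x q) (q' - q) ≤ g x q' := by
  have hf := (((hg3.2.1 x).differentiable one_ne_zero) q).hasFDerivAt
  rw [dot4_eq_sum, ← hf.apply_eq_sum_of_hasDerivAt_update (hg3.2.2 x q)]
  exact (hg4 x).add_le_of_hasFDerivAt hf q'

def hamiltonianDefect (g : Torus → (Fin 4 → ℝ) → ℝ) (gq : Torus → (Fin 4 → ℝ) → (Fin 4 → ℝ))
    (x : Torus) (q q' : Fin 4 → ℝ) (a b : ℝ) : ℝ :=
  (g x q - g x q') * (a - b) - (a * dot4 (gq x q) (q - q') - b * dot4 (gq x q') (q - q'))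

theorem Hg3.hamiltonianDefect_nonpos (hg3 : Hg3 g gq) (hg4 : Hg4 g) (x : Torus)
    (q q' : Fin 4 → ℝ) {a b : ℝ} (ha : 0 ≤ a) (hb : 0 ≤ b) :
    hamiltonianDefect g gq x q q' a b ≤ 0 := by
  have h := mul_le_mul_of_nonneg_left (hg3.add_dot4_le hg4 x q q') ha
  have h' := mul_le_mul_of_nonneg_left (hg3.add_dot4_le hg4 x q' q) hb
  have hswap : dot4 (gq x q) (q' - q) = -dot4 (gq x q) (q - q') := by
    simp only [dot4, Pi.sub_apply]; ring
  rw [hswap] at h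
  unfold hamiltonianDefect
  linarith

end Hamiltonian

abbrev GridFun (N : ℕ) : Type := ZMod N → ZMod N → ℝ

section Grid

variable {N : ℕ}

theorem laph_sub (a b : GridFun N) (i j : ZMod N) :
    laph (a - b) i j = laph a i j - laph b i j := by
  simp only [laph, Pi.sub_apply]; ring

theorem nablah_sub (a b : GridFun N) (i j : ZMod N) :
    nablah (a - b) i j = nablah a i j - nablah b i j := by
  ext k; fin_cases k <;> simp [nablah, D1, D2] <;> ring

theorem Transp_sub (gq : Torus → (Fin 4 → ℝ) → (Fin 4 → ℝ)) (u m m' : GridFun N)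
    (i j : ZMod N) : Transp gq u (m - m') i j = Transp gq u m i j - Transp gq u m' i j := by
  simp only [Transp, Pi.sub_apply]; ring

theorem dot4_nablah (p : Fin 4 → ℝ) (w : GridFun N) (i j : ZMod N) :
    dot4 p (nablah w i j) = p 0 * D1 w i j + p 1 * D1 w (i - 1) j + p 2 * D2 w i j
      + p 3 * D2 w i (j - 1) := rfl

/-- One implicit Bellman step linearised around a drift `α`; its adjoint is the implicit
Fokker–Planck step (`gridInner_hjbLinOp`). -/
def hjbLinOp (Δt ν : ℝ) (α : ZMod N → ZMod N → Fin 4 → ℝ) : GridFun N →ₗ[ℝ] GridFun N where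
  toFun v i j := v i j - Δt * ν * laph v i j + Δt * dot4 (α i j) (nablah v i j)
  map_add' v w := by
    funext i j
    simp only [Pi.add_apply, dot4_nablah, laph, D1, D2]
    ring
  map_smul' c v := by
    funext i j
    simp only [Pi.smul_apply, smul_eq_mul, RingHom.id_apply, dot4_nablah, laph, D1, D2]
    ring

theorem hjbLinOp_apply (Δt ν : ℝ) (α : ZMod N → ZMod N → Fin 4 → ℝ) (v : GridFun N)
    (i j : ZMod N) :
    hjbLinOp Δt ν α v i j = v i j - Δt * ν * laph v i j + Δt * dot4 (α i j) (nablah v i j) :=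
  rfl

theorem laph_nonpos_of_forall_le {v : GridFun N} {i₀ j₀ : ZMod N}
    (hmax : ∀ i j, v i j ≤ v i₀ j₀) : laph v i₀ j₀ ≤ 0 := by
  have := hmax (i₀ + 1) j₀; have := hmax (i₀ - 1) j₀
  have := hmax i₀ (j₀ + 1); have := hmax i₀ (j₀ - 1)
  unfold laph
  exact div_nonpos_of_nonpos_of_nonneg (by linarith) (sq_nonneg _)

variable [NeZero N]

theorem gridh_pos : 0 < gridh N := by
  unfold gridh
  have : (0 : ℝ) < N := Nat.cast_pos.2 (Nat.pos_of_ne_zero (NeZero.ne N))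
  positivity

theorem upwindSigns_nablah_of_forall_le {v : GridFun N} {i₀ j₀ : ZMod N}
    (hmax : ∀ i j, v i j ≤ v i₀ j₀) : UpwindSigns (nablah v i₀ j₀) := by
  have hh := (gridh_pos (N := N)).le
  refine ⟨div_nonpos_of_nonpos_of_nonneg (sub_nonpos.2 (hmax _ _)) hh, ?_,
    div_nonpos_of_nonpos_of_nonneg (sub_nonpos.2 (hmax _ _)) hh, ?_⟩ <;>
  · show 0 ≤ (_ - _) / _
    rw [sub_add_cancel]
    exact div_nonneg (sub_nonneg.2 (hmax _ _)) hh

section MaximumPrinciple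

variable {Δt ν : ℝ} {α : ZMod N → ZMod N → Fin 4 → ℝ}

theorem nonpos_of_hjbLinOp_nonpos (hΔt : 0 ≤ Δt) (hν : 0 ≤ ν)
    (hα : ∀ i j, UpwindSigns (α i j)) {v : GridFun N} (hv : ∀ i j, hjbLinOp Δt ν α v i j ≤ 0)
    (i j : ZMod N) : v i j ≤ 0 := by
  obtain ⟨⟨i₀, j₀⟩, hmax⟩ := Finite.exists_max fun p : ZMod N × ZMod N => v p.1 p.2
  have hmax' : ∀ i j, v i j ≤ v i₀ j₀ := fun i j => hmax (i, j)
  have hlap := mul_nonpos_of_nonneg_of_nonpos (mul_nonneg hΔt hν)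
    (laph_nonpos_of_forall_le hmax')
  have hdrift := mul_nonneg hΔt ((hα i₀ j₀).dot4_nonneg (upwindSigns_nablah_of_forall_le hmax'))
  have := hv i₀ j₀
  rw [hjbLinOp_apply] at this
  linarith [hmax' i j]

theorem hjbLinOp_injective (hΔt : 0 ≤ Δt) (hν : 0 ≤ ν) (hα : ∀ i j, UpwindSigns (α i j)) :
    Injective (hjbLinOp (N := N) Δt ν α) := by
  refine (injective_iff_map_eq_zero _).2 fun v hv => funext fun i => funext fun j => ?_
  have hle := nonpos_of_hjbLinOp_nonpos hΔt hν hα (v := v) (fun i j => by simp [hv]) i j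
  have hge := nonpos_of_hjbLinOp_nonpos hΔt hν hα (v := -v) (fun i j => by simp [hv]) i j
  simp only [Pi.neg_apply] at hge
  simp only [Pi.zero_apply]
  linarith

end MaximumPrinciple

def gridInner (a b : GridFun N) : ℝ := ∑ i, ∑ j, a i j * b i j

theorem eq_zero_of_gridInner_self_eq_zero {a : GridFun N} (h : gridInner a a = 0) : a = 0 := by
  have h0 := (sum_sum_eq_zero_iff_of_nonneg (f := fun i j => a i j * a i j)
    fun i j => mul_self_nonneg (a i j)).1 h
  exact funext fun i => funext fun j => mul_self_eq_zero.1 (congrFun₂ h0 i j)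

theorem sum_laph_mul_sub_mul_laph (a b : GridFun N) :
    ∑ i, ∑ j, (laph a i j * b i j - a i j * laph b i j) = 0 := by
  rw [← sum_sum_shift_sub_add_shift_sub
    (fun i j => (a i j * b (i - 1) j - a (i - 1) j * b i j) / gridh N ^ 2)
    (fun i j => (a i j * b i (j - 1) - a i (j - 1) * b i j) / gridh N ^ 2) 1 1]
  refine sum_congr rfl fun i _ => sum_congr rfl fun j _ => ?_
  simp only [laph, add_sub_cancel_right]
  ring

theorem sum_Transp_mul_add (gq : Torus → (Fin 4 → ℝ) → (Fin 4 → ℝ)) (u m w : GridFun N) :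
    ∑ i, ∑ j, (Transp gq u m i j * w i j
      + m i j * dot4 (gq (gridPt N i j) (nablah u i j)) (nablah w i j)) = 0 := by
  set P : Fin 4 → GridFun N := fun k i j => m i j * gq (gridPt N i j) (nablah u i j) k
  rw [← sum_sum_shift_sub_add_shift_sub
    (fun i j => (P 0 (i - 1) j * w i j + P 1 i j * w (i - 1) j) / gridh N)
    (fun i j => (P 2 i (j - 1) * w i j + P 3 i j * w i (j - 1)) / gridh N) 1 1]
  refine sum_congr rfl fun i _ => sum_congr rfl fun j _ => ?_
  simp only [P, Transp, dot4_nablah, D1, D2, add_sub_cancel_right, sub_add_cancel]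
  ring

theorem gridInner_hjbLinOp (gq : Torus → (Fin 4 → ℝ) → (Fin 4 → ℝ)) (Δt ν : ℝ)
    (u μ v : GridFun N) :
    gridInner μ (hjbLinOp Δt ν (fun i j => gq (gridPt N i j) (nablah u i j)) v)
      = gridInner (fun i j => μ i j - Δt * (ν * laph μ i j + Transp gq u μ i j)) v := by
  set R : GridFun N := fun i j => laph μ i j * v i j - μ i j * laph v i j
  set S : GridFun N := fun i j => Transp gq u μ i j * v i j
    + μ i j * dot4 (gq (gridPt N i j) (nablah u i j)) (nablah v i j)
  have hR : ∑ i, ∑ j, R i j = 0 := sum_laph_mul_sub_mul_laph μ v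
  have hS : ∑ i, ∑ j, S i j = 0 := sum_Transp_mul_add gq u μ v
  rw [← sub_eq_zero]
  calc _ = ∑ i, ∑ j, (Δt * ν * R i j + Δt * S i j) := by
        simp only [gridInner, ← sum_sub_distrib]
        refine sum_congr rfl fun i _ => sum_congr rfl fun j _ => ?_
        simp only [R, S, hjbLinOp_apply]
        ring
    _ = 0 := by simp only [sum_add_distrib, ← mul_sum, hR, hS, mul_zero, add_zero]

section Scheme

variable {g : Torus → (Fin 4 → ℝ) → ℝ} {gq : Torus → (Fin 4 → ℝ) → (Fin 4 → ℝ)} {Δt ν : ℝ}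

theorem bellman_step_le (hg1 : Hg1 g) (hg3 : Hg3 g gq) (hg4 : Hg4 g) (hΔt : 0 < Δt)
    (hν : 0 ≤ ν) {w v v' f f' : GridFun N} (hff' : ∀ i j, f i j ≤ f' i j)
    (hv : ∀ i j,
      (v i j - w i j) / Δt - ν * laph v i j + g (gridPt N i j) (nablah v i j) = f i j)
    (hv' : ∀ i j,
      (v' i j - w i j) / Δt - ν * laph v' i j + g (gridPt N i j) (nablah v' i j) = f' i j)
    (i j : ZMod N) : v i j ≤ v' i j := by
  refine sub_nonpos.1 (nonpos_of_hjbLinOp_nonpos (v := v - v') hΔt.le hν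
    (fun i j => hg1.upwindSigns hg3 (gridPt N i j) (nablah v' i j)) (fun i j => ?_) i j)
  set x := gridPt N i j
  have hdiff : v i j - v' i j
      = Δt * (f i j - f' i j + ν * (laph v i j - laph v' i j)
          - (g x (nablah v i j) - g x (nablah v' i j))) := by
    rw [← hv i j, ← hv' i j]; field_simp; ring
  have hconv := hg3.add_dot4_le hg4 x (nablah v' i j) (nablah v i j)
  rw [hjbLinOp_apply, laph_sub, nablah_sub]
  simp only [Pi.sub_apply]
  rw [hdiff]
  nlinarith [hff' i j]

theorem bellman_step_unique (hg1 : Hg1 g) (hg3 : Hg3 g gq) (hg4 : Hg4 g) (hΔt : 0 < Δt)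
    (hν : 0 ≤ ν) {w v v' f : GridFun N}
    (hv : ∀ i j,
      (v i j - w i j) / Δt - ν * laph v i j + g (gridPt N i j) (nablah v i j) = f i j)
    (hv' : ∀ i j,
      (v' i j - w i j) / Δt - ν * laph v' i j + g (gridPt N i j) (nablah v' i j) = f i j) :
    v = v' :=
  funext fun i => funext fun j => le_antisymm
    (bellman_step_le hg1 hg3 hg4 hΔt hν (fun _ _ => le_rfl) hv hv' i j)
    (bellman_step_le hg1 hg3 hg4 hΔt hν (fun _ _ => le_rfl) hv' hv i j)

theorem fokkerPlanck_step_unique (hg1 : Hg1 g) (hg3 : Hg3 g gq) (hΔt : 0 < Δt) (hν : 0 ≤ ν)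
    {u m m' m₁ : GridFun N}
    (hm : ∀ i j, (m₁ i j - m i j) / Δt + ν * laph m i j + Transp gq u m i j = 0)
    (hm' : ∀ i j, (m₁ i j - m' i j) / Δt + ν * laph m' i j + Transp gq u m' i j = 0) :
    m = m' := by
  set α := fun i j => gq (gridPt N i j) (nablah u i j)
  obtain ⟨v, hv⟩ := LinearMap.injective_iff_surjective.1
    (hjbLinOp_injective hΔt.le hν fun i j => hg1.upwindSigns hg3 (gridPt N i j) (nablah u i j))
    (m - m')
  have hμ : ∀ i j,
      (m - m') i j - Δt * (ν * laph (m - m') i j + Transp gq u (m - m') i j) = 0 := by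
    intro i j
    have e := hm i j
    have e' := hm' i j
    field_simp at e e'
    rw [laph_sub, Transp_sub]
    simp only [Pi.sub_apply]
    linear_combination e' - e
  rw [← sub_eq_zero]
  refine eq_zero_of_gridInner_self_eq_zero ?_
  calc gridInner (m - m') (m - m') = gridInner (m - m') (hjbLinOp Δt ν α v) := by rw [hv]
    _ = 0 := by
        rw [gridInner_hjbLinOp]
        simp only [hμ, gridInner, zero_mul, sum_const_zero]

end Scheme

section LasryLions

variable {g : Torus → (Fin 4 → ℝ) → ℝ} {gq : Torus → (Fin 4 → ℝ) → (Fin 4 → ℝ)} {Δt ν : ℝ}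
  {F : ℝ → ℝ} {u m u' m' : ℕ → GridFun N} {NT : ℕ}

theorem lasryLions_step (hΔt : Δt ≠ 0) (hB : BellmanEq g ν Δt F u m NT)
    (hB' : BellmanEq g ν Δt F u' m' NT) (hFP : FPEq gq ν Δt u m NT)
    (hFP' : FPEq gq ν Δt u' m' NT) {k : ℕ} (hk : k < NT) :
    gridInner (u (k + 1) - u' (k + 1)) (m (k + 1) - m' (k + 1))
        - gridInner (u k - u' k) (m k - m' k)
      = Δt * ∑ i, ∑ j, ((F (m k i j) - F (m' k i j)) * (m k i j - m' k i j)
          - hamiltonianDefect g gq (gridPt N i j) (nablah (u (k + 1)) i j)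
              (nablah (u' (k + 1)) i j) (m k i j) (m' k i j)) := by
  set δu := u (k + 1) - u' (k + 1)
  set δm := m k - m' k
  set R : GridFun N := fun i j => laph δu i j * δm i j - δu i j * laph δm i j
  set S : GridFun N := fun i j => Transp gq (u (k + 1)) (m k) i j * δu i j
    + m k i j * dot4 (gq (gridPt N i j) (nablah (u (k + 1)) i j)) (nablah δu i j)
  set S' : GridFun N := fun i j => Transp gq (u' (k + 1)) (m' k) i j * δu i j
    + m' k i j * dot4 (gq (gridPt N i j) (nablah (u' (k + 1)) i j)) (nablah δu i j)
  have hR : ∑ i, ∑ j, R i j = 0 := sum_laph_mul_sub_mul_laph δu δm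
  have hS : ∑ i, ∑ j, S i j = 0 := sum_Transp_mul_add gq _ _ δu
  have hS' : ∑ i, ∑ j, S' i j = 0 := sum_Transp_mul_add gq _ _ δu
  calc _ = ∑ i, ∑ j, (Δt * ((F (m k i j) - F (m' k i j)) * (m k i j - m' k i j)
          - hamiltonianDefect g gq (gridPt N i j) (nablah (u (k + 1)) i j)
              (nablah (u' (k + 1)) i j) (m k i j) (m' k i j))
        + Δt * ν * R i j - Δt * S i j + Δt * S' i j) := by
        simp only [gridInner, ← sum_sub_distrib]
        refine sum_congr rfl fun i _ => sum_congr rfl fun j _ => ?_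
        have e := hB k hk i j
        have e' := hB' k hk i j
        have f := hFP k hk i j
        have f' := hFP' k hk i j
        field_simp at e e' f f'
        simp only [R, S, S', δu, δm, laph_sub, nablah_sub, Pi.sub_apply, hamiltonianDefect]
        linear_combination (m k i j - m' k i j) * (e - e')
          + (u (k + 1) i j - u' (k + 1) i j) * (f - f')
    _ = _ := by simp only [sum_add_distrib, sum_sub_distrib, ← mul_sum, hR, hS, hS']; ring

theorem coupling_eq_of_lasryLions (hg3 : Hg3 g gq) (hg4 : Hg4 g) (hF : MonotoneOn F (Set.Ici 0))
    (hΔt : 0 < Δt) (hB : BellmanEq g ν Δt F u m NT) (hB' : BellmanEq g ν Δt F u' m' NT)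
    (hFP : FPEq gq ν Δt u m NT) (hFP' : FPEq gq ν Δt u' m' NT)
    (hm : ∀ k < NT, ∀ i j, 0 ≤ m k i j) (hm' : ∀ k < NT, ∀ i j, 0 ≤ m' k i j)
    (hu0 : u 0 = u' 0) (hmT : m NT = m' NT) {k : ℕ} (hk : k < NT) (i j : ZMod N) :
    F (m k i j) = F (m' k i j) := by
  set coupling : ℕ → GridFun N := fun k i j =>
    (F (m k i j) - F (m' k i j)) * (m k i j - m' k i j)
  set defect : ℕ → GridFun N := fun k i j =>
    hamiltonianDefect g gq (gridPt N i j) (nablah (u (k + 1)) i j) (nablah (u' (k + 1)) i j)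
      (m k i j) (m' k i j)
  have hcoupling : ∀ k < NT, ∀ i j, 0 ≤ coupling k i j := fun k hk i j =>
    (monovaryOn_id_iff.2 hF).sub_mul_sub_nonneg (hm' k hk i j) (hm k hk i j)
  have hdefect : ∀ k < NT, ∀ i j, defect k i j ≤ 0 := fun k hk i j =>
    hg3.hamiltonianDefect_nonpos hg4 _ _ _ (hm k hk i j) (hm' k hk i j)
  have hnonneg : ∀ k < NT, 0 ≤ coupling k - defect k := fun k hk i j =>
    sub_nonneg.2 ((hdefect k hk i j).trans (hcoupling k hk i j))
  have htotal : ∑ k ∈ range NT, Δt * ∑ i, ∑ j, (coupling k i j - defect k i j) = 0 := by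
    rw [← sum_congr rfl fun k hk => lasryLions_step hΔt.ne' hB hB' hFP hFP' (mem_range.1 hk),
      sum_range_sub (fun n => gridInner (u n - u' n) (m n - m' n)), hmT, hu0]
    simp [gridInner]
  have hterm : Δt * ∑ i, ∑ j, (coupling k i j - defect k i j) = 0 :=
    (sum_eq_zero_iff_of_nonneg fun k hk => mul_nonneg hΔt.le
      (Fintype.sum_nonneg fun i => Fintype.sum_nonneg (hnonneg k (mem_range.1 hk) i))).1
      htotal k (mem_range.2 hk)
  have hzero : coupling k - defect k = 0 := (sum_sum_eq_zero_iff_of_nonneg (hnonneg k hk)).1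
    ((mul_eq_zero.1 hterm).resolve_left hΔt.ne')
  have hcoupling_zero : coupling k i j = 0 := by
    have : coupling k i j - defect k i j = 0 := congrFun₂ hzero i j
    linarith [hcoupling k hk i j, hdefect k hk i j]
  rcases mul_eq_zero.1 hcoupling_zero with h | h
  · linarith
  · rw [sub_eq_zero.1 h]

end LasryLions

end Grid

theorem discrete_MFG_uniqueness_general (N NT : ℕ) [NeZero N] (hNT : 0 < NT)
    (T ν : ℝ) (hT : 0 < T) (hν : 0 < ν)
    (g : Torus → (Fin 4 → ℝ) → ℝ) (gq : Torus → (Fin 4 → ℝ) → (Fin 4 → ℝ))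
    (hg1 : Hg1 g) (hg3 : Hg3 g gq) (hg4 : Hg4 g)
    (F : ℝ → ℝ) (hFmono : MonotoneOn F (Set.Ici 0))
    (u m u' m' : ℕ → ZMod N → ZMod N → ℝ)
    (hu0 : u 0 = u' 0) (hmT : m NT = m' NT)
    (hsys : BellmanEq g ν (T / NT) F u m NT ∧ FPEq gq ν (T / NT) u m NT ∧
      ∀ k ≤ NT, inKh (m k))
    (hsys' : BellmanEq g ν (T / NT) F u' m' NT ∧ FPEq gq ν (T / NT) u' m' NT ∧
      ∀ k ≤ NT, inKh (m' k)) :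
    ∀ n ≤ NT, u n = u' n ∧ m n = m' n := by
  obtain ⟨hB, hFP, hK⟩ := hsys
  obtain ⟨hB', hFP', hK'⟩ := hsys'
  have hΔt : 0 < T / NT := div_pos hT (Nat.cast_pos.2 hNT)
  have hF : ∀ k < NT, ∀ i j, F (m k i j) = F (m' k i j) := fun k hk =>
    coupling_eq_of_lasryLions hg3 hg4 hFmono hΔt hB hB' hFP hFP'
      (fun k hk => (hK k hk.le).1) (fun k hk => (hK' k hk.le).1) hu0 hmT hk
  have hu : ∀ n ≤ NT, u n = u' n := by
    intro n
    induction n with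
    | zero => exact fun _ => hu0
    | succ k ih =>
      intro hk
      refine bellman_step_unique hg1 hg3 hg4 hΔt hν.le (hB k hk) fun i j => ?_
      rw [hF k hk i j, ih (Nat.le_of_succ_le hk)]
      exact hB' k hk i j
  have hm : ∀ n ≤ NT, m n = m' n := by
    intro n hn
    induction hn using Nat.decreasingInduction with
    | self => exact hmT
    | of_succ k hk ih =>
      refine fokkerPlanck_step_unique hg1 hg3 hΔt hν.le (hFP k hk) fun i j => ?_
      rw [ih, hu (k + 1) hk]
      exact hFP' k hk i j
  exact fun n hn => ⟨hu n hn, hm n hn⟩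

/-- Uniqueness for the discrete MFG system.
Under (g1)–(g4), if `F` is continuous and nondecreasing, then two solutions of the
discrete MFG system with the same initial data `u⁰` and the same terminal data
`m^{N_T} ∈ 𝒦_h`, both with `m^k ∈ 𝒦_h` for all `k`, coincide. -/
theorem discrete_MFG_uniqueness (N NT : ℕ) [NeZero N] (hNT : 0 < NT)
    (T ν : ℝ) (hT : 0 < T) (hν : 0 < ν)
    (g : Torus → (Fin 4 → ℝ) → ℝ) (gq : Torus → (Fin 4 → ℝ) → (Fin 4 → ℝ))
    (H : Torus → ℝ × ℝ → ℝ)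
    (hg1 : Hg1 g) (hg2 : Hg2 g H) (hg3 : Hg3 g gq) (hg4 : Hg4 g)
    (F : ℝ → ℝ) (hFc : ContinuousOn F (Set.Ici 0)) (hFmono : MonotoneOn F (Set.Ici 0))
    (u m u' m' : ℕ → ZMod N → ZMod N → ℝ)
    (hu0 : u 0 = u' 0) (hmT : m NT = m' NT) (hmTK : inKh (m NT))
    (hsys : BellmanEq g ν (T / NT) F u m NT ∧ FPEq gq ν (T / NT) u m NT ∧
      ∀ k ≤ NT, inKh (m k))
    (hsys' : BellmanEq g ν (T / NT) F u' m' NT ∧ FPEq gq ν (T / NT) u' m' NT ∧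
      ∀ k ≤ NT, inKh (m' k)) :
    ∀ n ≤ NT, u n = u' n ∧ m n = m' n :=
  discrete_MFG_uniqueness_general N NT hNT T ν hT hν g gq hg1 hg3 hg4 F hFmono u m u' m' hu0 hmT
    hsys hsys'

end
end

section
/- Assume (g1) and (g3) for the numerical Hamiltonian g. Let (u^n)_{0≤n≤N_T} be grid functions, and let (m^n)_{0≤n≤N_T} be grid functions satisfying the discrete Fokker–Planck equation (m^{n+1}_{i,j} − m^n_{i,j})/Δt + ν(Δ_h m^n)_{i,j} + 𝒯_{i,j}(u^{n+1}, m^n) = 0 for all i,j and all 0 ≤ n < N_T. If m^{N_T} ∈ 𝒦_h, then m^n ∈ 𝒦_h for all n with 0 ≤ n < N_T (i.e., the scheme preserves nonnegativity and total mass h² Σ_{i,j} m^n_{i,j} = 1). -/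
open Finset

noncomputable section

/-! The scheme reads `m^{n+1} = m^n + Δt · (net outflow of m^n)`, where the outflow is that of a
random walk on the grid jumping to the four neighbours at rates `ν/h² ∓ g_{q_r}/h`, nonnegative by
(g1). Outflow and inflow cancel in the total sum, so mass is conserved. Let `S = {m^n < 0}`. Each
flux `a_r m^n` has the sign of `m^n`, so its sum over `S` is at most its sum over the shifted set
`S - e_r`: the net outflow from `S` is `≤ 0`. Hence `∑_S m^{n+1} ≤ ∑_S m^n`, which is `< 0` unless
`S = ∅`, whereas `m^{n+1} ≥ 0`. -/

section NetOutflow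

variable {G R : Type*} [AddCommGroup G] [Fintype G] [Fintype R]

/-- Mass at `k` jumps to `k + e r` at rate `a r k`. -/
def netOutflow (e : R → G) (a : R → G → ℝ) (m : G → ℝ) (k : G) : ℝ :=
  ∑ r, (a r k * m k - a r (k - e r) * m (k - e r))

theorem sum_netOutflow (e : R → G) (a : R → G → ℝ) (m : G → ℝ) :
    ∑ k, netOutflow e a m k = 0 := by
  simp only [netOutflow]
  rw [sum_comm]
  refine sum_eq_zero fun r _ => ?_
  rw [sum_sub_distrib]
  exact sub_eq_zero.2 ((Equiv.subRight (e r)).sum_comp fun k => a r k * m k).symm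

theorem sum_add_mul_netOutflow (e : R → G) (a : R → G → ℝ) (m : G → ℝ) (τ : ℝ) :
    ∑ k, (m k + τ * netOutflow e a m k) = ∑ k, m k := by
  rw [sum_add_distrib, ← mul_sum, sum_netOutflow, mul_zero, add_zero]

theorem sum_neg_set_mul_sub_shift_nonpos {c : G → ℝ} (hc : ∀ k, 0 ≤ c k) (m : G → ℝ) (e : G) :
    ∑ k with m k < 0, (c k * m k - c (k - e) * m (k - e)) ≤ 0 := by
  have hshift : ∑ k with m k < 0, c (k - e) * m (k - e)
      = ∑ k, if m (k + e) < 0 then c k * m k else 0 := by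
    rw [sum_filter]
    simpa using ((Equiv.subRight e).sum_comp
      fun k => if m (k + e) < 0 then c k * m k else 0)
  rw [sum_sub_distrib, hshift, sum_filter, sub_nonpos]
  refine sum_le_sum fun k _ => ?_
  have hcm := hc k
  split_ifs with hk
  · exact le_rfl
  · exact mul_nonpos_of_nonneg_of_nonpos hcm hk.le
  · exact mul_nonneg hcm (not_lt.1 hk)
  · exact le_rfl

theorem sum_neg_set_netOutflow_nonpos (e : R → G) {a : R → G → ℝ} (ha : ∀ r k, 0 ≤ a r k)
    (m : G → ℝ) : ∑ k with m k < 0, netOutflow e a m k ≤ 0 := by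
  simp only [netOutflow]
  rw [sum_comm]
  exact sum_nonpos fun r _ => sum_neg_set_mul_sub_shift_nonpos (ha r) m (e r)

theorem nonneg_of_nonneg_add_mul_netOutflow (e : R → G) {a : R → G → ℝ}
    (ha : ∀ r k, 0 ≤ a r k) {τ : ℝ} (hτ : 0 ≤ τ) {m : G → ℝ}
    (h : ∀ k, 0 ≤ m k + τ * netOutflow e a m k) : ∀ k, 0 ≤ m k := by
  by_contra! hneg
  obtain ⟨k₀, hk₀⟩ := hneg
  have hS : ({k | m k < 0} : Finset G).Nonempty := ⟨k₀, by simpa using hk₀⟩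
  have hsum : 0 ≤ ∑ k with m k < 0, (m k + τ * netOutflow e a m k) :=
    sum_nonneg fun k _ => h k
  rw [sum_add_distrib, ← mul_sum] at hsum
  have hm : ∑ k with m k < 0, m k < 0 := sum_neg (fun k hk => (mem_filter.1 hk).2) hS
  linarith [mul_nonpos_of_nonneg_of_nonpos hτ (sum_neg_set_netOutflow_nonpos e ha m)]

end NetOutflow

section Grid

variable {N : ℕ}

def gridShift (N : ℕ) : Fin 4 → ZMod N × ZMod N := ![(1, 0), (-1, 0), (0, 1), (0, -1)]

def upwindSign : Fin 4 → ℝ := ![-1, 1, -1, 1]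

def fpRate (ν : ℝ) (gq : Torus → (Fin 4 → ℝ) → (Fin 4 → ℝ)) (u : ZMod N → ZMod N → ℝ)
    (r : Fin 4) (k : ZMod N × ZMod N) : ℝ :=
  ν / gridh N ^ 2 + upwindSign r * gq (gridPt N k.1 k.2) (nablah u k.1 k.2) r / gridh N

theorem upwindSign_mul_gq_nonneg {g : Torus → (Fin 4 → ℝ) → ℝ}
    {gq : Torus → (Fin 4 → ℝ) → (Fin 4 → ℝ)} (hg1 : Hg1 g) (hg3 : Hg3 g gq)
    (x : Torus) (q : Fin 4 → ℝ) (r : Fin 4) : 0 ≤ upwindSign r * gq x q r := by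
  have hderiv := hg3.2.2 x q
  fin_cases r <;>
    simp only [upwindSign, Fin.zero_eta, Fin.mk_one, Fin.reduceFinMk, Matrix.cons_val,
      neg_one_mul, neg_nonneg, one_mul]
  · exact (hderiv 0).nonpos_of_antitone fun s t hst => (hg1 x q s t hst).1
  · exact (hderiv 1).nonneg_of_monotone fun s t hst => (hg1 x q s t hst).2.2.1
  · exact (hderiv 2).nonpos_of_antitone fun s t hst => (hg1 x q s t hst).2.1
  · exact (hderiv 3).nonneg_of_monotone fun s t hst => (hg1 x q s t hst).2.2.2

theorem fpRate_nonneg {ν : ℝ} (hν : 0 ≤ ν) {gq : Torus → (Fin 4 → ℝ) → (Fin 4 → ℝ)}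
    (hgq : ∀ x q r, 0 ≤ upwindSign r * gq x q r) (u : ZMod N → ZMod N → ℝ) (r : Fin 4)
    (k : ZMod N × ZMod N) : 0 ≤ fpRate ν gq u r k := by
  have hh : 0 ≤ gridh N := by unfold gridh; positivity
  exact add_nonneg (by positivity) (div_nonneg (hgq _ _ r) hh)

theorem fp_step_eq_add_mul_netOutflow [NeZero N] {ν Δt : ℝ} (hΔt : Δt ≠ 0)
    {gq : Torus → (Fin 4 → ℝ) → (Fin 4 → ℝ)} {u m m' : ZMod N → ZMod N → ℝ}
    (hfp : ∀ i j, (m' i j - m i j) / Δt + ν * laph m i j + Transp gq u m i j = 0)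
    (k : ZMod N × ZMod N) :
    m' k.1 k.2 = m k.1 k.2
      + Δt * netOutflow (gridShift N) (fpRate ν gq u) (fun k => m k.1 k.2) k := by
  obtain ⟨i, j⟩ := k
  have hh : gridh N ≠ 0 := by simp [gridh, NeZero.ne N]
  have := hfp i j
  simp only [netOutflow, Fin.sum_univ_four, gridShift, fpRate, upwindSign, laph, Transp,
    Matrix.cons_val, Prod.mk_sub_mk, sub_zero, sub_neg_eq_add] at this ⊢
  field_simp at this ⊢
  linear_combination this

theorem inKh_of_fp_step [NeZero N] {ν Δt : ℝ} (hν : 0 ≤ ν) (hΔt : 0 < Δt)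
    {gq : Torus → (Fin 4 → ℝ) → (Fin 4 → ℝ)} (hgq : ∀ x q r, 0 ≤ upwindSign r * gq x q r)
    {u m m' : ZMod N → ZMod N → ℝ}
    (hfp : ∀ i j, (m' i j - m i j) / Δt + ν * laph m i j + Transp gq u m i j = 0)
    (hm' : inKh m') : inKh m := by
  have hstep := fp_step_eq_add_mul_netOutflow hΔt.ne' hfp
  have hnonneg := nonneg_of_nonneg_add_mul_netOutflow (gridShift N) (fpRate_nonneg hν hgq u)
    hΔt.le fun k => hstep k ▸ hm'.1 k.1 k.2
  refine ⟨fun i j => hnonneg (i, j), ?_⟩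
  have hmass : ∑ i, ∑ j, m' i j = ∑ i, ∑ j, m i j := by
    simp only [← Fintype.sum_prod_type', hstep]
    exact sum_add_mul_netOutflow _ _ _ _
  rw [← hmass]
  exact hm'.2

end Grid

theorem discrete_FP_preserves_Kh_general (N NT : ℕ) [NeZero N]
    (ν Δt : ℝ) (hν : 0 < ν) (hΔt : 0 < Δt)
    (g : Torus → (Fin 4 → ℝ) → ℝ) (gq : Torus → (Fin 4 → ℝ) → (Fin 4 → ℝ))
    (hg1 : Hg1 g) (hg3 : Hg3 g gq)
    (u m : ℕ → ZMod N → ZMod N → ℝ)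
    (hFP : FPEq gq ν Δt u m NT)
    (hmT : inKh (m NT)) :
    ∀ n < NT, inKh (m n) := by
  intro n hn
  refine Nat.decreasingInduction (motive := fun n _ => inKh (m n)) (fun k hk hmk => ?_) hmT hn.le
  exact inKh_of_fp_step hν.le hΔt (upwindSign_mul_gq_nonneg hg1 hg3) (hFP k hk) hmk

/-- The discrete Fokker–Planck scheme preserves `𝒦_h`.
Under (g1) and (g3), if `(m^n)` solves the discrete Fokker–Planck equation for
`0 ≤ n < N_T` and `m^{N_T} ∈ 𝒦_h`, then `m^n ∈ 𝒦_h` for all `0 ≤ n < N_T`. -/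
theorem discrete_FP_preserves_Kh (N NT : ℕ) [NeZero N] (hNT : 0 < NT)
    (ν Δt : ℝ) (hν : 0 < ν) (hΔt : 0 < Δt)
    (g : Torus → (Fin 4 → ℝ) → ℝ) (gq : Torus → (Fin 4 → ℝ) → (Fin 4 → ℝ))
    (hg1 : Hg1 g) (hg3 : Hg3 g gq)
    (u m : ℕ → ZMod N → ZMod N → ℝ)
    (hFP : FPEq gq ν Δt u m NT)
    (hmT : inKh (m NT)) :
    ∀ n < NT, inKh (m n) :=
  discrete_FP_preserves_Kh_general N NT ν Δt hν hΔt g gq hg1 hg3 u m hFP hmT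
end
end

section
/- Let ℋ : 𝕋² → ℝ be continuous, let 1 < β ≤ 2, and define g(x, q) = ℋ(x) + G(q₁⁻, q₂⁺, q₃⁻, q₄⁺) for q = (q₁,q₂,q₃,q₄) ∈ ℝ⁴, where G(p) = (p₁² + p₂² + p₃² + p₄²)^{β/2}. Then g is C¹ in q, and for all (x,q): ∇_q g(x,q) · q = β · G(q₁⁻, q₂⁺, q₃⁻, q₄⁺) and |∇_q g(x,q)|² = β² · ( G(q₁⁻, q₂⁺, q₃⁻, q₄⁺) )^{2(β−1)/β}. Consequently g satisfies (g5): there exist positive constants c₁, c₂, c₃, c₄ such that for all (x,q), ∇_q g(x,q)·q − g(x,q) ≥ c₁ |∇_q g(x,q)|² − c₂ and |∇_q g(x,q)| ≤ c₃ |q| + c₄. -/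
open Finset

noncomputable section

/-!
Write `u(q) = (q₁⁻, q₂⁺, q₃⁻, q₄⁺)`, so that `g(x, q) = ℋ(x) + ‖u(q)‖^β` with the Euclidean norm.
The map `u` is not differentiable, but `N = ‖·‖^β` is `C¹` for `β > 1`, and its derivative at
`u(q)` only sees the coordinates with `uᵢ(q) > 0`, near which `uᵢ(y) = εᵢ yᵢ` with
`ε = (-1, 1, -1, 1)`. So the chain rule still holds with `h ↦ (εᵢ hᵢ)ᵢ` in place of `Du(q)`, giving
`∇_q g = β ‖u‖^(β-2) (εᵢ uᵢ)ᵢ`. Since `uᵢ εᵢ qᵢ = uᵢ²`, this yields `∇_q g · q = β ‖u‖^β` and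
`|∇_q g| = β ‖u‖^(β-1)`. For `β ≤ 2` we have `2(β-1) ≤ β` and `β-1 ≤ 1`, so
`s^(2(β-1)) ≤ s^β + 1` and `s^(β-1) ≤ s + 1`; with `ℋ` bounded on the compact torus this is (g5).
-/

open Asymptotics Filter Topology
open scoped InnerProductSpace

section

variable {𝕜 E F G : Type*} [NontriviallyNormedField 𝕜]
  [NormedAddCommGroup E] [NormedSpace 𝕜 E] [NormedAddCommGroup F] [NormedSpace 𝕜 F]
  [NormedAddCommGroup G] [NormedSpace 𝕜 G]

theorem HasFDerivAt.comp_of_isBigO_of_eventually_eq {f : F → G} {u : E → F} {f' : F →L[𝕜] G}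
    {L : E →L[𝕜] F} {x : E} (hf : HasFDerivAt f f' (u x))
    (hu : (fun y => u y - u x) =O[𝓝 x] fun y => y - x)
    (hL : ∀ᶠ y in 𝓝 x, f' (u y - u x) = f' (L (y - x))) :
    HasFDerivAt (fun y => f (u y)) (f'.comp L) x := by
  have hu_tendsto : Tendsto u (𝓝 x) (𝓝 (u x)) := by
    have := hu.trans_tendsto (tendsto_sub_nhds_zero_iff.2 tendsto_id)
    simpa using this.add_const (u x)
  refine .of_isLittleO (((hf.isLittleO.comp_tendsto hu_tendsto).trans_isBigO hu).congr' ?_ .rfl)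
  filter_upwards [hL] with y hy
  simp only [Function.comp_apply, ContinuousLinearMap.comp_apply, hy]

end

theorem eventually_max_zero_mul_sub_eq (t : ℝ) :
    ∀ᶠ s in 𝓝 t, max t 0 * (max s 0 - max t 0) = max t 0 * (s - t) := by
  rcases le_or_gt t 0 with ht | ht
  · simp [max_eq_right ht]
  · filter_upwards [lt_mem_nhds ht] with s hs
    rw [max_eq_left hs.le, max_eq_left ht.le]

theorem rpow_le_rpow_add_one {s a b : ℝ} (hs : 0 ≤ s) (ha : 0 ≤ a) (hab : a ≤ b) :
    s ^ a ≤ s ^ b + 1 := by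
  rcases le_total s 1 with h | h
  · linarith [Real.rpow_le_one hs h ha, Real.rpow_nonneg hs b]
  · linarith [Real.rpow_le_rpow_of_exponent_le h hab]

theorem sum_sq_rpow_half_eq_norm_rpow {ι : Type*} [Fintype ι] (p : ι → ℝ) (β : ℝ) :
    (∑ i, p i ^ 2) ^ (β / 2) = ‖WithLp.toLp 2 p‖ ^ β := by
  rw [EuclideanSpace.norm_eq, Real.sqrt_eq_rpow, ← Real.rpow_mul (by positivity)]
  simp only [Real.norm_eq_abs, sq_abs]
  ring_nf

section SignedPosPart

variable {ι : Type*} (ε : ι → ℝ)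

/-- For `ε i = 1` the `i`-th coordinate is `(q i)⁺`, for `ε i = -1` it is `(q i)⁻`. -/
def signedPosPart (q : ι → ℝ) : EuclideanSpace ℝ ι :=
  WithLp.toLp 2 fun i => max (ε i * q i) 0

@[simp]
theorem signedPosPart_apply (q : ι → ℝ) (i : ι) : signedPosPart ε q i = max (ε i * q i) 0 := rfl

theorem continuous_signedPosPart : Continuous (signedPosPart ε) := by
  unfold signedPosPart
  fun_prop

def signMul : (ι → ℝ) →L[ℝ] EuclideanSpace ℝ ι :=
  (EuclideanSpace.equiv ι ℝ).symm.toContinuousLinearMap.comp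
    (ContinuousLinearMap.pi fun i => ε i • ContinuousLinearMap.proj i)

@[simp]
theorem signMul_apply (h : ι → ℝ) (i : ι) : signMul ε h i = ε i * h i := rfl

variable [Fintype ι]

theorem norm_signedPosPart_sub_le (y q : ι → ℝ) :
    ‖signedPosPart ε y - signedPosPart ε q‖ ≤ ‖signMul ε (y - q)‖ := by
  rw [EuclideanSpace.norm_eq, EuclideanSpace.norm_eq]
  gcongr with i
  simpa [Real.norm_eq_abs, mul_sub] using abs_max_sub_max_le_abs (ε i * y i) (ε i * q i) 0

theorem eventually_inner_signedPosPart_sub_eq (q : ι → ℝ) :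
    ∀ᶠ y in 𝓝 q, ⟪signedPosPart ε q, signedPosPart ε y - signedPosPart ε q⟫_ℝ
      = ⟪signedPosPart ε q, signMul ε (y - q)⟫_ℝ := by
  have hcomp : ∀ i, ∀ᶠ y in 𝓝 q, max (ε i * q i) 0 * (max (ε i * y i) 0 - max (ε i * q i) 0)
      = max (ε i * q i) 0 * (ε i * y i - ε i * q i) := fun i =>
    ((continuous_const.mul (continuous_apply i)).tendsto q).eventually
      (eventually_max_zero_mul_sub_eq (ε i * q i))
  filter_upwards [eventually_all.2 hcomp] with y hy
  simp only [PiLp.inner_apply]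
  refine Finset.sum_congr rfl fun i _ => ?_
  simpa [mul_sub, mul_comm] using hy i

theorem hasFDerivAt_norm_signedPosPart_rpow {β : ℝ} (hβ : 1 < β) (q : ι → ℝ) :
    HasFDerivAt (fun q => ‖signedPosPart ε q‖ ^ β)
      (((β * ‖signedPosPart ε q‖ ^ (β - 2)) • innerSL ℝ (signedPosPart ε q)).comp (signMul ε))
      q := by
  refine (hasFDerivAt_norm_rpow _ hβ).comp_of_isBigO_of_eventually_eq ?_ ?_
  · exact (IsBigO.of_bound' (Eventually.of_forall fun y => norm_signedPosPart_sub_le ε y q)).trans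
      ((signMul ε).isBigO_sub (𝓝 q) q)
  · filter_upwards [eventually_inner_signedPosPart_sub_eq ε q] with y hy
    simp [hy]

theorem contDiff_norm_signedPosPart_rpow {β : ℝ} (hβ : 1 < β) :
    ContDiff ℝ 1 (fun q => ‖signedPosPart ε q‖ ^ β) := by
  rw [contDiff_one_iff_fderiv]
  refine ⟨fun q => (hasFDerivAt_norm_signedPosPart_rpow ε hβ q).differentiableAt, ?_⟩
  simp_rw [funext fun q => (hasFDerivAt_norm_signedPosPart_rpow ε hβ q).fderiv]
  have hcont := (contDiff_norm_rpow (E := EuclideanSpace ℝ ι) hβ).continuous_fderiv one_ne_zero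
  rw [show (fderiv ℝ fun y : EuclideanSpace ℝ ι => ‖y‖ ^ β) = _ from
    funext fun y => fderiv_norm_rpow y hβ] at hcont
  exact (hcont.comp (continuous_signedPosPart ε)).clm_comp continuous_const

theorem inner_signedPosPart_signMul_self (q : ι → ℝ) :
    ⟪signedPosPart ε q, signMul ε q⟫_ℝ = ‖signedPosPart ε q‖ ^ 2 := by
  rw [← real_inner_self_eq_norm_sq]
  simp only [PiLp.inner_apply]
  refine Finset.sum_congr rfl fun i _ => ?_
  rcases le_total (ε i * q i) 0 with h | h
  · simp [max_eq_right h]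
  · simp [max_eq_left h]

theorem norm_signMul (hε : ∀ i, |ε i| = 1) (h : ι → ℝ) : ‖signMul ε h‖ = ‖WithLp.toLp 2 h‖ := by
  simp only [EuclideanSpace.norm_eq, signMul_apply, norm_mul, Real.norm_eq_abs, hε, one_mul]

theorem norm_signedPosPart_le (hε : ∀ i, |ε i| = 1) (q : ι → ℝ) :
    ‖signedPosPart ε q‖ ≤ ‖WithLp.toLp 2 q‖ := by
  have h0 : signedPosPart ε 0 = 0 := by ext i; simp
  have := norm_signedPosPart_sub_le ε q 0
  rwa [h0, sub_zero, sub_zero, norm_signMul ε hε] at this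

theorem fderiv_norm_signedPosPart_rpow_apply {β : ℝ} (hβ : 1 < β) (q h : ι → ℝ) :
    fderiv ℝ (fun q => ‖signedPosPart ε q‖ ^ β) q h
      = β * ‖signedPosPart ε q‖ ^ (β - 2) * ⟪signedPosPart ε q, signMul ε h⟫_ℝ := by
  rw [(hasFDerivAt_norm_signedPosPart_rpow ε hβ q).fderiv]
  simp only [ContinuousLinearMap.comp_apply, smul_apply, innerSL_apply_apply,
    smul_eq_mul]

theorem fderiv_norm_signedPosPart_rpow_self {β : ℝ} (hβ : 1 < β) (q : ι → ℝ) :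
    fderiv ℝ (fun q => ‖signedPosPart ε q‖ ^ β) q q = β * ‖signedPosPart ε q‖ ^ β := by
  rw [fderiv_norm_signedPosPart_rpow_apply ε hβ, inner_signedPosPart_signMul_self, mul_assoc,
    ← Real.rpow_natCast, ← Real.rpow_add' (norm_nonneg _) (by norm_num; linarith)]
  norm_num

theorem norm_gradient_norm_signedPosPart_rpow [DecidableEq ι] (hε : ∀ i, |ε i| = 1) {β : ℝ}
    (hβ : 1 < β) (q : ι → ℝ) :
    ‖WithLp.toLp 2 fun i => fderiv ℝ (fun q => ‖signedPosPart ε q‖ ^ β) q (Pi.single i 1)‖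
      = β * ‖signedPosPart ε q‖ ^ (β - 1) := by
  have hgrad : (WithLp.toLp 2 fun i => fderiv ℝ (fun q => ‖signedPosPart ε q‖ ^ β) q
      (Pi.single i 1)) = (β * ‖signedPosPart ε q‖ ^ (β - 2)) • signMul ε (signedPosPart ε q) := by
    ext i
    simp [fderiv_norm_signedPosPart_rpow_apply ε hβ, PiLp.inner_apply, Pi.single_apply]
  rw [hgrad, norm_smul, norm_signMul ε hε, WithLp.toLp_ofLp, Real.norm_of_nonneg (by positivity),
    mul_assoc, ← Real.rpow_add_one' (norm_nonneg _) (by linarith)]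
  ring_nf

end SignedPosPart

theorem norm4_eq_norm (p : Fin 4 → ℝ) : norm4 p = ‖WithLp.toLp 2 p‖ := by
  simp [norm4, dot4, EuclideanSpace.norm_eq, Fin.sum_univ_four, sq]

theorem dot4_apply_single (L : (Fin 4 → ℝ) →L[ℝ] ℝ) (q : Fin 4 → ℝ) :
    dot4 (fun i => L (Pi.single i 1)) q = L q := by
  have hq : q = ∑ i, q i • Pi.single i (1 : ℝ) := by ext j; simp [Pi.single_apply]
  conv_rhs => rw [hq]
  simp [dot4, Fin.sum_univ_four, mul_comm]

theorem hg5_of_rpow_growth {β : ℝ} (hβ1 : 1 < β) (hβ2 : β ≤ 2) {g : Torus → (Fin 4 → ℝ) → ℝ}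
    {gq : Torus → (Fin 4 → ℝ) → (Fin 4 → ℝ)} {s : Torus → (Fin 4 → ℝ) → ℝ} {C : ℝ}
    (hs : ∀ x q, 0 ≤ s x q) (hs_le : ∀ x q, s x q ≤ norm4 q)
    (hdot : ∀ x q, (β - 1) * s x q ^ β - C ≤ dot4 (gq x q) q - g x q)
    (hnorm : ∀ x q, norm4 (gq x q) = β * s x q ^ (β - 1)) : Hg5 g gq := by
  refine ⟨(β - 1) / β ^ 2, β + |C|, β, β, by have := sub_pos.2 hβ1; positivity,
    by positivity, by positivity, by positivity, fun x q => ⟨?_, ?_⟩⟩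
  · have hsq : (s x q ^ (β - 1)) ^ 2 ≤ s x q ^ β + 1 := by
      rw [← Real.rpow_mul_natCast (hs x q)]
      exact rpow_le_rpow_add_one (hs x q) (by push_cast; linarith) (by push_cast; linarith)
    calc (β - 1) / β ^ 2 * norm4 (gq x q) ^ 2 - (β + |C|)
        = (β - 1) * (s x q ^ (β - 1)) ^ 2 - (β + |C|) := by
          rw [hnorm x q]; field_simp
      _ ≤ (β - 1) * (s x q ^ β + 1) - (β + |C|) := by gcongr
      _ ≤ (β - 1) * s x q ^ β - C := by linarith [le_abs_self C]
      _ ≤ dot4 (gq x q) q - g x q := hdot x q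
  · calc norm4 (gq x q) = β * s x q ^ (β - 1) := hnorm x q
      _ ≤ β * (s x q ^ (1 : ℝ) + 1) := by
          gcongr; exact rpow_le_rpow_add_one (hs x q) (by linarith) (by linarith)
      _ ≤ β * norm4 q + β := by rw [Real.rpow_one]; nlinarith [hs_le x q]

/-- The model numerical Hamiltonian satisfies (g5).
For `g(x,q) = ℋ(x) + G(q₁⁻, q₂⁺, q₃⁻, q₄⁺)` with `G(p) = |p|^β`, `1 < β ≤ 2`:
`g` is C¹ in `q`, the gradient identities hold, and (g5) holds. -/
theorem model_Hamiltonian_g5 (β : ℝ) (hβ1 : 1 < β) (hβ2 : β ≤ 2)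
    (ℋ : Torus → ℝ) (hℋ : Continuous ℋ)
    (G : (Fin 4 → ℝ) → ℝ)
    (hG : G = fun p => (p 0 ^ 2 + p 1 ^ 2 + p 2 ^ 2 + p 3 ^ 2) ^ (β / 2))
    (g : Torus → (Fin 4 → ℝ) → ℝ)
    (hg : g = fun x q =>
      ℋ x + G ![max (-(q 0)) 0, max (q 1) 0, max (-(q 2)) 0, max (q 3) 0]) :
    (∀ x, ContDiff ℝ 1 (g x)) ∧
    (∀ x (q : Fin 4 → ℝ),
      dot4 (fun i => fderiv ℝ (g x) q (Pi.single i 1)) q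
        = β * G ![max (-(q 0)) 0, max (q 1) 0, max (-(q 2)) 0, max (q 3) 0]) ∧
    (∀ x (q : Fin 4 → ℝ),
      (norm4 (fun i => fderiv ℝ (g x) q (Pi.single i 1))) ^ 2
        = β ^ 2 * (G ![max (-(q 0)) 0, max (q 1) 0, max (-(q 2)) 0, max (q 3) 0])
            ^ (2 * (β - 1) / β)) ∧
    Hg5 g (fun x q i => fderiv ℝ (g x) q (Pi.single i 1)) := by
  set ε : Fin 4 → ℝ := ![-1, 1, -1, 1]
  have hε : ∀ i, |ε i| = 1 := by intro i; fin_cases i <;> simp [ε]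
  have hGε : ∀ q, G ![max (-(q 0)) 0, max (q 1) 0, max (-(q 2)) 0, max (q 3) 0]
      = ‖signedPosPart ε q‖ ^ β := by
    intro q
    rw [hG, ← sum_sq_rpow_half_eq_norm_rpow]
    simp [Fin.sum_univ_four, ε]
  have hgε : ∀ x, g x = fun q => ℋ x + ‖signedPosPart ε q‖ ^ β := by
    intro x; simp only [hg, hGε]
  have hgrad : ∀ x q, fderiv ℝ (g x) q = fderiv ℝ (fun q => ‖signedPosPart ε q‖ ^ β) q := by
    intro x q; rw [hgε, fderiv_const_add]
  simp only [hGε, hgrad]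
  obtain ⟨C, hC⟩ := isCompact_univ.exists_bound_of_continuousOn hℋ.continuousOn
  refine ⟨fun x => hgε x ▸ contDiff_const.add (contDiff_norm_signedPosPart_rpow ε hβ1),
    fun x q => by rw [dot4_apply_single, fderiv_norm_signedPosPart_rpow_self ε hβ1],
    fun x q => ?_, hg5_of_rpow_growth hβ1 hβ2 (s := fun _ q => ‖signedPosPart ε q‖) (C := C)
      (fun _ _ => norm_nonneg _) ?_ ?_ ?_⟩
  · rw [norm4_eq_norm, norm_gradient_norm_signedPosPart_rpow ε hε hβ1, mul_pow,
      ← Real.rpow_mul_natCast (norm_nonneg _), ← Real.rpow_mul (norm_nonneg _)]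
    field_simp
    norm_num
  · intro x q; rw [norm4_eq_norm]; exact norm_signedPosPart_le ε hε q
  · intro x q
    rw [dot4_apply_single, fderiv_norm_signedPosPart_rpow_self ε hβ1, hgε]
    linarith [(le_abs_self _).trans (hC x trivial)]
  · intro x q; rw [norm4_eq_norm, norm_gradient_norm_signedPosPart_rpow ε hε hβ1]
end
end

section
/- Assume (g1) and (g3) for the numerical Hamiltonian g, assume F : ℝ≥0 → ℝ satisfies F(t) ≥ F̲ for all t ≥ 0, and let M₀ = max_{x ∈ 𝕋²} g(x, 0, 0, 0, 0). Let (m^n)_{0≤n<N_T} be nonnegative grid functions and let (u^n)_{0≤n≤N_T} be grid functions satisfying the discrete Bellman equation (u^{n+1}_{i,j} − u^n_{i,j})/Δt − ν(Δ_h u^{n+1})_{i,j} + g(x_{i,j}, [∇_h u^{n+1}]_{i,j}) = F(m^n_{i,j}) for all i,j and all 0 ≤ n < N_T. Then for all i, j, n: u^n_{i,j} ≥ u̲ − T · (F̲ − M₀)⁻, where u̲ = min_{i,j} u⁰_{i,j} and r⁻ = max(−r, 0). -/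
open Finset

noncomputable section

/-! At a grid point where `u^{n+1}` is minimal, all four one-sided differences have the sign for
which (g1) gives `g(x, ∇_h u^{n+1}) ≤ g(x, 0) ≤ M₀`, and the discrete Laplacian is nonnegative.
The Bellman equation at that point therefore yields
`min u^{n+1} ≥ min u^n + Δt (F̲ - M₀)`, and summing over at most `N_T` steps of length
`Δt = T / N_T` gives the bound. -/

theorem Hg1.apply_le_apply_of_le {g : Torus → (Fin 4 → ℝ) → ℝ} (hg1 : Hg1 g) (x : Torus)
    {p q : Fin 4 → ℝ} (h0 : p 0 ≤ q 0) (h1 : q 1 ≤ p 1) (h2 : p 2 ≤ q 2) (h3 : q 3 ≤ p 3) :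
    g x q ≤ g x p := by
  set r₁ := Function.update q 0 (p 0)
  set r₂ := Function.update r₁ 1 (p 1)
  set r₃ := Function.update r₂ 2 (p 2)
  have hp : Function.update r₃ 3 (p 3) = p := by
    ext k; fin_cases k <;> simp [r₁, r₂, r₃]
  calc g x q = g x (Function.update q 0 (q 0)) := by rw [Function.update_eq_self]
    _ ≤ g x r₁ := (hg1 x q _ _ h0).1
    _ = g x (Function.update r₁ 1 (q 1)) := by
      rw [Function.update_eq_self_iff.mpr (by simp [r₁])]
    _ ≤ g x r₂ := (hg1 x r₁ _ _ h1).2.2.1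
    _ = g x (Function.update r₂ 2 (q 2)) := by
      rw [Function.update_eq_self_iff.mpr (by simp [r₁, r₂])]
    _ ≤ g x r₃ := (hg1 x r₂ _ _ h2).2.1
    _ = g x (Function.update r₃ 3 (q 3)) := by
      rw [Function.update_eq_self_iff.mpr (by simp [r₁, r₂, r₃])]
    _ ≤ g x p := hp ▸ (hg1 x r₃ _ _ h3).2.2.2

theorem Hg3.apply_zero_le_iSup {g : Torus → (Fin 4 → ℝ) → ℝ}
    {gq : Torus → (Fin 4 → ℝ) → (Fin 4 → ℝ)} (hg3 : Hg3 g gq) (x : Torus) :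
    g x 0 ≤ ⨆ y : Torus, g y 0 :=
  le_ciSup (isCompact_range (hg3.1.comp (continuous_id.prodMk continuous_const))).bddAbove x

section DiscreteMinimum

variable {N : ℕ} {v : ZMod N → ZMod N → ℝ} {i j : ZMod N}

theorem laph_nonneg_of_forall_le (hmin : ∀ a b, v i j ≤ v a b) : 0 ≤ laph v i j := by
  unfold laph
  have := hmin (i + 1) j; have := hmin (i - 1) j; have := hmin i (j + 1); have := hmin i (j - 1)
  exact div_nonneg (by linarith) (sq_nonneg _)

theorem Hg1.apply_nablah_le_of_forall_le {g : Torus → (Fin 4 → ℝ) → ℝ} (hg1 : Hg1 g)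
    (x : Torus) (hmin : ∀ a b, v i j ≤ v a b) : g x (nablah v i j) ≤ g x 0 := by
  have hh : 0 ≤ gridh N := by unfold gridh; positivity
  refine hg1.apply_le_apply_of_le x ?_ ?_ ?_ ?_ <;>
    simp only [nablah, D1, D2, sub_add_cancel, Pi.zero_apply, Matrix.cons_val]
  · exact div_nonneg (by linarith [hmin (i + 1) j]) hh
  · exact div_nonpos_of_nonpos_of_nonneg (by linarith [hmin (i - 1) j]) hh
  · exact div_nonneg (by linarith [hmin i (j + 1)]) hh
  · exact div_nonpos_of_nonpos_of_nonneg (by linarith [hmin i (j - 1)]) hh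

end DiscreteMinimum

def gridMin {N : ℕ} [NeZero N] (v : ZMod N → ZMod N → ℝ) : ℝ :=
  Finset.univ.inf' Finset.univ_nonempty (fun p : ZMod N × ZMod N => v p.1 p.2)

section GridMin

variable {N : ℕ} [NeZero N]

theorem gridMin_le (v : ZMod N → ZMod N → ℝ) (i j : ZMod N) : gridMin v ≤ v i j :=
  Finset.inf'_le _ (Finset.mem_univ (i, j))

theorem exists_gridMin_eq (v : ZMod N → ZMod N → ℝ) : ∃ i j, gridMin v = v i j := by
  obtain ⟨⟨i, j⟩, -, h⟩ := Finset.exists_mem_eq_inf' Finset.univ_nonempty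
    (fun p : ZMod N × ZMod N => v p.1 p.2)
  exact ⟨i, j, h⟩

theorem gridMin_add_le_gridMin_of_bellman_step {g : Torus → (Fin 4 → ℝ) → ℝ} (hg1 : Hg1 g)
    {ν Δt Fbar M : ℝ} (hν : 0 ≤ ν) (hΔt : 0 < Δt) (hM : ∀ x, g x 0 ≤ M)
    {v w : ZMod N → ZMod N → ℝ}
    (hw : ∀ i j, Fbar ≤ (w i j - v i j) / Δt - ν * laph w i j + g (gridPt N i j) (nablah w i j)) :
    gridMin v + Δt * (Fbar - M) ≤ gridMin w := by
  obtain ⟨i, j, hij⟩ := exists_gridMin_eq w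
  have hmin : ∀ a b, w i j ≤ w a b := fun a b => hij ▸ gridMin_le w a b
  have hlap := mul_nonneg hν (laph_nonneg_of_forall_le hmin)
  have hg := (hg1.apply_nablah_le_of_forall_le (gridPt N i j) hmin).trans (hM _)
  have hslope : Fbar - M ≤ (w i j - v i j) / Δt := by linarith [hw i j]
  have hincr : Δt * (Fbar - M) ≤ w i j - v i j := by
    rwa [le_div_iff₀ hΔt, mul_comm] at hslope
  linarith [gridMin_le v i j]

end GridMin

theorem add_mul_le_of_forall_add_le {a : ℕ → ℝ} {δ : ℝ} {K : ℕ}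
    (h : ∀ k < K, a k + δ ≤ a (k + 1)) : ∀ n ≤ K, a 0 + n * δ ≤ a n := by
  intro n hn
  induction n with
  | zero => simp
  | succ k ih =>
    have := h k hn
    have := ih (Nat.le_of_succ_le hn)
    push_cast
    linarith

theorem discrete_Bellman_lower_bound_general (N NT : ℕ) [NeZero N]
    (T ν : ℝ) (hT : 0 < T) (hν : 0 < ν)
    (g : Torus → (Fin 4 → ℝ) → ℝ) (gq : Torus → (Fin 4 → ℝ) → (Fin 4 → ℝ))
    (hg1 : Hg1 g) (hg3 : Hg3 g gq)
    (F : ℝ → ℝ) (Fbar : ℝ) (hF : ∀ t : ℝ, 0 ≤ t → Fbar ≤ F t)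
    (u m : ℕ → ZMod N → ZMod N → ℝ)
    (hm : ∀ n < NT, ∀ i j, 0 ≤ m n i j)
    (hB : BellmanEq g ν (T / NT) F u m NT) :
    ∀ n ≤ NT, ∀ i j,
      (Finset.univ.inf' Finset.univ_nonempty
          (fun p : ZMod N × ZMod N => u 0 p.1 p.2))
        - T * max (-(Fbar - ⨆ x : Torus, g x (fun _ => 0))) 0
      ≤ u n i j := by
  intro n hn i j
  set M := ⨆ x : Torus, g x 0
  have hsteps : ∀ k < NT, gridMin (u k) + T / NT * (Fbar - M) ≤ gridMin (u (k + 1)) :=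
    fun k hk => gridMin_add_le_gridMin_of_bellman_step hg1 hν.le
      (div_pos hT (by exact_mod_cast (Nat.zero_le k).trans_lt hk)) hg3.apply_zero_le_iSup
      fun i j => (hB k hk i j).symm ▸ hF _ (hm k hk i j)
  have hmin := add_mul_le_of_forall_add_le hsteps n hn
  have htime : n * (T / NT) ≤ T := by
    rcases Nat.eq_zero_or_pos NT with rfl | hNT
    · simpa using hT.le
    · rw [mul_div_left_comm]
      exact mul_le_of_le_one_right hT.le (div_le_one_of_le₀ (by exact_mod_cast hn) (by positivity))
  have hdrift : -(T * max (-(Fbar - M)) 0) ≤ n * (T / NT) * (Fbar - M) := by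
    nlinarith [le_max_left (-(Fbar - M)) 0, le_max_right (-(Fbar - M)) 0,
      mul_nonneg (Nat.cast_nonneg n) (div_nonneg hT.le (Nat.cast_nonneg NT))]
  change gridMin (u 0) - T * max (-(Fbar - M)) 0 ≤ u n i j
  linarith [gridMin_le (u n) i j]

/-- Lower bound for the solution of the discrete Bellman equation.
Under (g1), (g3), if `F ≥ F̲` on `[0,∞)` and `(u^n)` solves the discrete Bellman
equation with nonnegative data `(m^n)`, then
`u^n_{i,j} ≥ u̲ − T (F̲ − max_x g(x,0))⁻` for all `i, j` and `n ≤ N_T`. -/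
theorem discrete_Bellman_lower_bound (N NT : ℕ) [NeZero N] (hNT : 0 < NT)
    (T ν : ℝ) (hT : 0 < T) (hν : 0 < ν)
    (g : Torus → (Fin 4 → ℝ) → ℝ) (gq : Torus → (Fin 4 → ℝ) → (Fin 4 → ℝ))
    (hg1 : Hg1 g) (hg3 : Hg3 g gq)
    (F : ℝ → ℝ) (Fbar : ℝ) (hF : ∀ t : ℝ, 0 ≤ t → Fbar ≤ F t)
    (u m : ℕ → ZMod N → ZMod N → ℝ)
    (hm : ∀ n < NT, ∀ i j, 0 ≤ m n i j)
    (hB : BellmanEq g ν (T / NT) F u m NT) :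
    ∀ n ≤ NT, ∀ i j,
      (Finset.univ.inf' Finset.univ_nonempty
          (fun p : ZMod N × ZMod N => u 0 p.1 p.2))
        - T * max (-(Fbar - ⨆ x : Torus, g x (fun _ => 0))) 0
      ≤ u n i j :=
  discrete_Bellman_lower_bound_general N NT T ν hT hν g gq hg1 hg3 F Fbar hF u m hm hB

end
end

section
/- Let (m^k)_{k=0,…,N_T} be grid functions on 𝕋²_h such that every m^k belongs to 𝒦_h and m^k_{i,j} > 0 for all i,j,k. Then for any 0 ≤ n < N_T: h² Σ_{k=n}^{N_T−1} Σ_{i,j} ( m^{k+1}_{i,j} − m^k_{i,j} ) ln(m^k_{i,j}) ≤ h² Σ_{i,j} m^{N_T}_{i,j} ln(m^{N_T}_{i,j}) − h² Σ_{i,j} m^n_{i,j} ln(m^n_{i,j}) + 1. -/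
open Finset

noncomputable section

/-! The function `Φ(x) = x log x - x` is convex with `Φ' = log`, so its tangent-line inequality
gives `(m^{k+1} - m^k) log m^k ≤ Φ(m^{k+1}) - Φ(m^k)` at every grid point. Summing over the grid
and telescoping in `k` bounds the left-hand side by `h² Σ Φ(m^{N_T}) - h² Σ Φ(m^n)`, and the terms
linear in `m` cancel because both densities have mass `h² Σ m = 1`. -/

open Real

lemma sub_mul_log_le {a b : ℝ} (ha : 0 ≤ a) (hb : 0 < b) :
    (a - b) * log b ≤ (a * log a - a) - (b * log b - b) := by
  rcases ha.eq_or_lt with rfl | ha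
  · simpa using hb.le
  have key : 1 - (a / b)⁻¹ ≤ log (a / b) := one_sub_inv_le_log_of_pos (by positivity)
  rw [inv_div, log_div ha.ne' hb.ne'] at key
  have hab : a - b ≤ a * (log a - log b) := by
    simpa [mul_sub, mul_div_cancel₀ _ ha.ne'] using mul_le_mul_of_nonneg_left key ha.le
  linear_combination hab

lemma sum_sub_mul_log_le {ι : Type*} (s : Finset ι) {p q : ι → ℝ}
    (hp : ∀ i ∈ s, 0 ≤ p i) (hq : ∀ i ∈ s, 0 < q i) :
    ∑ i ∈ s, (p i - q i) * log (q i)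
      ≤ ∑ i ∈ s, (p i * log (p i) - p i) - ∑ i ∈ s, (q i * log (q i) - q i) := by
  rw [← Finset.sum_sub_distrib]
  exact Finset.sum_le_sum fun i hi => sub_mul_log_le (hp i hi) (hq i hi)

lemma sum_Ico_le_sub_of_le_sub {a F : ℕ → ℝ} {n N : ℕ} (hnN : n ≤ N)
    (h : ∀ k ∈ Finset.Ico n N, a k ≤ F (k + 1) - F k) :
    ∑ k ∈ Finset.Ico n N, a k ≤ F N - F n :=
  (Finset.sum_le_sum h).trans_eq (Finset.sum_Ico_sub F hnN)

theorem discrete_entropy_inequality_general (N NT : ℕ) [NeZero N]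
    (m : ℕ → ZMod N → ZMod N → ℝ)
    (hmK : ∀ k ≤ NT, inKh (m k))
    (hmpos : ∀ k ≤ NT, ∀ i j, 0 < m k i j)
    (n : ℕ) (hn : n < NT) :
    (gridh N) ^ 2 * ∑ k ∈ Finset.Ico n NT, ∑ i, ∑ j,
        (m (k + 1) i j - m k i j) * Real.log (m k i j)
      ≤ (gridh N) ^ 2 * ∑ i, ∑ j, m NT i j * Real.log (m NT i j)
        - (gridh N) ^ 2 * ∑ i, ∑ j, m n i j * Real.log (m n i j) + 1 := by
  set F : ℕ → ℝ := fun k => ∑ i, ∑ j, (m k i j * log (m k i j) - m k i j)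
  have hstep : ∀ k ∈ Finset.Ico n NT,
      ∑ i, ∑ j, (m (k + 1) i j - m k i j) * log (m k i j) ≤ F (k + 1) - F k := by
    intro k hk
    have hk : k + 1 ≤ NT := (Finset.mem_Ico.mp hk).2
    simpa only [F, Fintype.sum_prod_type] using sum_sub_mul_log_le Finset.univ
      (p := fun x : ZMod N × ZMod N => m (k + 1) x.1 x.2) (q := fun x => m k x.1 x.2)
      (fun x _ => (hmpos (k + 1) hk x.1 x.2).le) (fun x _ => hmpos k (by omega) x.1 x.2)
  have hF : ∀ k ≤ NT, (gridh N) ^ 2 * F k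
      = (gridh N) ^ 2 * ∑ i, ∑ j, m k i j * log (m k i j) - 1 := by
    intro k hk
    simp only [F, Finset.sum_sub_distrib, mul_sub, (hmK k hk).2]
  have htelescope := mul_le_mul_of_nonneg_left (sum_Ico_le_sub_of_le_sub hn.le hstep)
    (sq_nonneg (gridh N))
  rw [mul_sub, hF NT le_rfl, hF n hn.le] at htelescope
  linarith

/-- Discrete entropy inequality. -/
theorem discrete_entropy_inequality (N NT : ℕ) [NeZero N] (hNT : 0 < NT)
    (m : ℕ → ZMod N → ZMod N → ℝ)
    (hmK : ∀ k ≤ NT, inKh (m k))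
    (hmpos : ∀ k ≤ NT, ∀ i j, 0 < m k i j)
    (n : ℕ) (hn : n < NT) :
    (gridh N) ^ 2 * ∑ k ∈ Finset.Ico n NT, ∑ i, ∑ j,
        (m (k + 1) i j - m k i j) * Real.log (m k i j)
      ≤ (gridh N) ^ 2 * ∑ i, ∑ j, m NT i j * Real.log (m NT i j)
        - (gridh N) ^ 2 * ∑ i, ∑ j, m n i j * Real.log (m n i j) + 1 :=
  discrete_entropy_inequality_general N NT m hmK hmpos n hn

end
end

section
/- For any grid function m on 𝕋²_h with m_{i,j} > 0 for all i,j, the discrete Fisher-information bound holds: Σ_{i,j} [ (√(m_{i+1,j}) − √(m_{i,j}))² + (√(m_{i,j+1}) − √(m_{i,j}))² ] ≤ h² Σ_{i,j} (D_h m)_{i,j} · (D_h ln(m))_{i,j}, i.e. |√m|²_{H¹(𝕋²_h)} ≤ h² Σ_{i,j} (D_h m)_{i,j} · (D_h ln(m))_{i,j}, where ln(m) and √m denote the grid functions (ln m_{i,j})_{i,j} and (√(m_{i,j}))_{i,j}. -/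
open Finset

noncomputable section

/- Summand by summand, `h² (D m)·(D ln m)` is `(b - a)(ln b - ln a)` for neighbouring values `a`, `b`
of `m`, and `(√b - √a)² ≤ (b - a)(ln b - ln a)`: for `a ≤ b`, `ln b - ln a ≥ 1 - a/b = (b - a)/b`, while
`(√b - √a)² = (b - a)² / (√a + √b)² ≤ (b - a)² / b`. -/

lemma sqrt_sub_sqrt_sq_le_mul_log_sub_log {a b : ℝ} (ha : 0 < a) (hb : 0 < b) :
    (Real.sqrt b - Real.sqrt a) ^ 2 ≤ (b - a) * (Real.log b - Real.log a) := by
  wlog hab : a ≤ b generalizing a b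
  · have := this hb ha (le_of_not_ge hab)
    linarith
  have hlog : (b - a) / b ≤ Real.log b - Real.log a := by
    have := Real.one_sub_inv_le_log_of_pos (div_pos hb ha)
    rw [Real.log_div hb.ne' ha.ne', inv_div] at this
    rwa [sub_div, div_self hb.ne']
  have hsqrt : (Real.sqrt b - Real.sqrt a) ^ 2 * b ≤ (b - a) * (b - a) := by
    have hsa := Real.sq_sqrt ha.le
    have hsb := Real.sq_sqrt hb.le
    have hsum : 0 ≤ Real.sqrt a * (Real.sqrt a + 2 * Real.sqrt b) := by positivity
    nlinarith [mul_nonneg (sq_nonneg (Real.sqrt b - Real.sqrt a)) hsum]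
  calc (Real.sqrt b - Real.sqrt a) ^ 2 ≤ (b - a) * ((b - a) / b) := by
        rwa [mul_div_assoc', le_div_iff₀ hb]
    _ ≤ (b - a) * (Real.log b - Real.log a) :=
        mul_le_mul_of_nonneg_left hlog (sub_nonneg.mpr hab)

lemma gridh_ne_zero (N : ℕ) [NeZero N] : gridh N ≠ 0 := by
  simp [gridh, NeZero.ne N]

lemma gridh_sq_mul_D1_mul_D1 {N : ℕ} [NeZero N] (v w : ZMod N → ZMod N → ℝ) (i j : ZMod N) :
    gridh N ^ 2 * (D1 v i j * D1 w i j) = (v (i + 1) j - v i j) * (w (i + 1) j - w i j) := by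
  rw [D1, D1]
  field_simp [gridh_ne_zero N]

lemma gridh_sq_mul_D2_mul_D2 {N : ℕ} [NeZero N] (v w : ZMod N → ZMod N → ℝ) (i j : ZMod N) :
    gridh N ^ 2 * (D2 v i j * D2 w i j) = (v i (j + 1) - v i j) * (w i (j + 1) - w i j) := by
  rw [D2, D2]
  field_simp [gridh_ne_zero N]

/-- Discrete Fisher-information bound:
`|√m|²_{H¹(𝕋²_h)} ≤ h² Σ_{i,j} (D_h m)_{i,j} · (D_h ln m)_{i,j}` for positive `m`. -/
theorem discrete_fisher_information_bound (N : ℕ) [NeZero N]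
    (m : ZMod N → ZMod N → ℝ) (hm : ∀ i j, 0 < m i j) :
    ∑ i, ∑ j, ((Real.sqrt (m (i + 1) j) - Real.sqrt (m i j)) ^ 2
        + (Real.sqrt (m i (j + 1)) - Real.sqrt (m i j)) ^ 2)
      ≤ (gridh N) ^ 2 * ∑ i, ∑ j,
          (D1 m i j * D1 (fun a b => Real.log (m a b)) i j
            + D2 m i j * D2 (fun a b => Real.log (m a b)) i j) := by
  simp_rw [mul_sum, mul_add, gridh_sq_mul_D1_mul_D1, gridh_sq_mul_D2_mul_D2]
  gcongr with i _ j _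
  · exact sqrt_sub_sqrt_sq_le_mul_log_sub_log (hm i j) (hm (i + 1) j)
  · exact sqrt_sub_sqrt_sq_le_mul_log_sub_log (hm i j) (hm i (j + 1))

end
end

section
/- For every real number z > −1: (√(1+z) − 1)² ≤ z · ln(1+z). -/
/-!
Put `s = √(1+z)`, so that `z · ln(1+z) = 2 (s + 1) · (s - 1) ln s`. The tangent-line bounds
`1 - 1/s ≤ ln s ≤ s - 1` give `(s - 1) ln s ≥ (s - 1)² / s` for `s ≥ 1` and
`(s - 1) ln s ≥ (s - 1)²` for `s ≤ 1`; since `(s - 1) ln s ≥ 0` and `2 (s + 1) ≥ max s 1`, both suffice.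
-/

open Real

namespace Real

variable {s : ℝ}

lemma sub_one_sq_le_mul_sub_one_mul_log (hs : 1 ≤ s) : (s - 1) ^ 2 ≤ s * ((s - 1) * log s) := by
  have hs0 : 0 < s := by linarith
  have hlog : s - 1 ≤ s * log s := by
    have := mul_le_mul_of_nonneg_left (one_sub_inv_le_log_of_pos hs0) hs0.le
    rwa [mul_sub, mul_one, mul_inv_cancel₀ hs0.ne'] at this
  calc (s - 1) ^ 2 = (s - 1) * (s - 1) := sq _
    _ ≤ (s - 1) * (s * log s) := mul_le_mul_of_nonneg_left hlog (by linarith)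
    _ = s * ((s - 1) * log s) := by ring

lemma sub_one_sq_le_sub_one_mul_log (hs0 : 0 < s) (hs : s ≤ 1) :
    (s - 1) ^ 2 ≤ (s - 1) * log s := by
  rw [sq]
  exact mul_le_mul_of_nonpos_left (log_le_sub_one_of_pos hs0) (by linarith)

lemma sub_one_sq_le_two_mul_sq_sub_one_mul_log (hs : 0 < s) :
    (s - 1) ^ 2 ≤ 2 * (s ^ 2 - 1) * log s := by
  have hfactor : 2 * (s ^ 2 - 1) * log s = 2 * (s + 1) * ((s - 1) * log s) := by ring
  rw [hfactor]
  rcases le_total 1 s with hs1 | hs1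
  · have key := sub_one_sq_le_mul_sub_one_mul_log hs1
    have hnonneg : 0 ≤ (s - 1) * log s := mul_nonneg (by linarith) (log_nonneg hs1)
    nlinarith
  · have key := sub_one_sq_le_sub_one_mul_log hs hs1
    have hnonneg : 0 ≤ (s - 1) * log s := mul_nonneg_of_nonpos_of_nonpos (by linarith)
      (log_nonpos hs.le hs1)
    nlinarith

end Real

/-- for every `z > −1`, `(√(1+z) − 1)² ≤ z ln(1+z)`. -/
theorem sqrt_sub_one_sq_le_mul_log (z : ℝ) (hz : -1 < z) :
    (Real.sqrt (1 + z) - 1) ^ 2 ≤ z * Real.log (1 + z) := by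
  have hpos : 0 < 1 + z := by linarith
  calc (√(1 + z) - 1) ^ 2 ≤ 2 * (√(1 + z) ^ 2 - 1) * log √(1 + z) :=
        sub_one_sq_le_two_mul_sq_sub_one_mul_log (sqrt_pos.mpr hpos)
    _ = z * log (1 + z) := by rw [sq_sqrt hpos.le, log_sqrt hpos.le]; ring
end

section
/- Let g : 𝕋² × ℝ⁴ → ℝ satisfy (g1) (nonincreasing in q₁ and q₃, nondecreasing in q₂ and q₄), (g3) (continuous, C¹ in q), and (g5) (there exist c₁,c₂,c₃,c₄ > 0 with ∇_q g(x,q)·q − g(x,q) ≥ c₁|∇_q g(x,q)|² − c₂ and |∇_q g(x,q)| ≤ c₃|q| + c₄ for all (x,q)), and assume sup_{x∈𝕋²} |g(x,0,0,0,0)| < ∞. Then there exists λ > 0 such that for all x ∈ 𝕋² and all q = (q₁,q₂,q₃,q₄) ∈ ℝ⁴: g(x, q₁, q₂, q₃, q₄) ≤ λ · [ 1 + (q₁⁻)² + (q₂⁺)² + (q₃⁻)² + (q₄⁺)² ]. -/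
open Finset

noncomputable section

/-!
By (g1), `g x q` can only increase when `q` is clamped to the orthant `{q₁, q₃ ≤ 0 ≤ q₂, q₄}`,
and the squared norm of the clamped point `q'` is exactly the bracket on the right-hand side.
Walking from `0` to `q'` one coordinate at a time stays in the box `|rᵢ| ≤ |q'ᵢ|`, where the
gradient bound of (g5) gives `|∂ᵢ g| ≤ c₃ |q'| + c₄`; the mean value theorem then yields
`g(x, q') ≤ g(x, 0) + 4 (c₃ |q'| + c₄) |q'|`, which is quadratic in `|q'|`.
-/

lemma norm4_eq_sqrt_sum_sq (p : Fin 4 → ℝ) : norm4 p = √(∑ i, p i ^ 2) := by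
  simp only [norm4, dot4, Fin.sum_univ_four, sq]

lemma abs_apply_le_norm4 (p : Fin 4 → ℝ) (i : Fin 4) : |p i| ≤ norm4 p := by
  rw [norm4_eq_sqrt_sum_sq, ← Real.sqrt_sq_eq_abs]
  exact Real.sqrt_le_sqrt (single_le_sum (fun j _ => sq_nonneg (p j)) (mem_univ i))

lemma norm4_le_norm4_of_abs_le {p q : Fin 4 → ℝ} (h : ∀ i, |p i| ≤ |q i|) :
    norm4 p ≤ norm4 q := by
  simp only [norm4_eq_sqrt_sum_sq]
  exact Real.sqrt_le_sqrt (sum_le_sum fun i _ => sq_le_sq.mpr (h i))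

lemma norm4_nonneg (p : Fin 4 → ℝ) : 0 ≤ norm4 p := Real.sqrt_nonneg _

lemma sq_norm4 (p : Fin 4 → ℝ) : norm4 p ^ 2 = ∑ i, p i ^ 2 := by
  rw [norm4_eq_sqrt_sum_sq, Real.sq_sqrt (sum_nonneg fun i _ => sq_nonneg (p i))]

section PartialDerivatives

variable {ι : Type*} [DecidableEq ι] {f : (ι → ℝ) → ℝ} {f' : (ι → ℝ) → ι → ℝ}

lemma le_update_zero_add_of_hasDerivAt_update
    (hf : ∀ q i, HasDerivAt (fun t => f (Function.update q i t)) (f' q i) (q i))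
    (r : ι → ℝ) (i : ι) {a C : ℝ}
    (hC : ∀ t ∈ Set.uIcc 0 a, |f' (Function.update r i t) i| ≤ C) :
    f (Function.update r i a) ≤ f (Function.update r i 0) + C * |a| := by
  have hderiv : ∀ t, HasDerivAt (fun s => f (Function.update r i s))
      (f' (Function.update r i t) i) t := fun t => by
    simpa only [Function.update_idem, Function.update_self] using hf (Function.update r i t) i
  have hmvt := Convex.norm_image_sub_le_of_norm_hasDerivWithin_le
    (fun t _ => (hderiv t).hasDerivWithinAt) hC (convex_uIcc 0 a)
    Set.left_mem_uIcc Set.right_mem_uIcc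
  rw [Real.norm_eq_abs, Real.norm_eq_abs, sub_zero] at hmvt
  linarith [le_abs_self (f (Function.update r i a) - f (Function.update r i 0))]

/-- The points `s.piecewise q 0` walk from `0` to `q` along edges of the box `|r i| ≤ |q i|`. -/
lemma le_zero_add_sum_of_hasDerivAt_update [Fintype ι]
    (hf : ∀ q i, HasDerivAt (fun t => f (Function.update q i t)) (f' q i) (q i))
    (q : ι → ℝ) {C : ℝ} (hC : ∀ r : ι → ℝ, (∀ i, |r i| ≤ |q i|) → ∀ i, |f' r i| ≤ C) :
    f q ≤ f 0 + ∑ i, C * |q i| := by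
  classical
  suffices ∀ s : Finset ι, f (s.piecewise q 0) ≤ f 0 + ∑ i ∈ s, C * |q i| by
    simpa using this univ
  intro s
  induction s using Finset.induction_on with
  | empty => simp
  | insert a s has ih =>
    have hzero : Function.update (s.piecewise q 0) a 0 = s.piecewise q 0 :=
      Function.update_eq_self_iff.mpr (by simp [has])
    have hbox : ∀ t ∈ Set.uIcc 0 (q a), ∀ i, |Function.update (s.piecewise q 0) a t i| ≤ |q i| := by
      intro t ht i
      rcases eq_or_ne i a with rfl | hia
      · rw [Function.update_self]
        simpa using Set.abs_sub_left_of_mem_uIcc ht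
      · rw [Function.update_of_ne hia]
        by_cases his : i ∈ s <;> simp [his]
    have hstep := le_update_zero_add_of_hasDerivAt_update hf (s.piecewise q 0) a
      (fun t ht => hC _ (hbox t ht) a)
    rw [hzero] at hstep
    rw [piecewise_insert, sum_insert has]
    linarith

end PartialDerivatives

def orthantClamp (q : Fin 4 → ℝ) : Fin 4 → ℝ :=
  ![min (q 0) 0, max (q 1) 0, min (q 2) 0, max (q 3) 0]

lemma sq_norm4_orthantClamp (q : Fin 4 → ℝ) :
    norm4 (orthantClamp q) ^ 2 = (max (-(q 0)) 0) ^ 2 + (max (q 1) 0) ^ 2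
      + (max (-(q 2)) 0) ^ 2 + (max (q 3) 0) ^ 2 := by
  have hmin : ∀ a : ℝ, max (-a) 0 ^ 2 = min a 0 ^ 2 := fun a => by
    rw [← neg_zero, max_neg_neg, neg_sq, neg_zero]
  simp [sq_norm4, orthantClamp, Fin.sum_univ_four, hmin]

lemma Hg1.le_orthantClamp {g : Torus → (Fin 4 → ℝ) → ℝ} (hg1 : Hg1 g) (x : Torus)
    (q : Fin 4 → ℝ) : g x q ≤ g x (orthantClamp q) := by
  set r₀ := Function.update q 0 (min (q 0) 0)
  set r₁ := Function.update r₀ 1 (max (q 1) 0)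
  set r₂ := Function.update r₁ 2 (min (q 2) 0)
  have h₀ := (hg1 x q (min (q 0) 0) (q 0) (min_le_left _ _)).1
  have h₁ := (hg1 x r₀ (r₀ 1) (max (q 1) 0) (by simp [r₀])).2.2.1
  have h₂ := (hg1 x r₁ (min (q 2) 0) (r₁ 2) (by simp [r₀, r₁])).2.1
  have h₃ := (hg1 x r₂ (r₂ 3) (max (q 3) 0) (by simp [r₀, r₁, r₂])).2.2.2
  have hclamp : Function.update r₂ 3 (max (q 3) 0) = orthantClamp q := by
    ext i; fin_cases i <;> simp [r₀, r₁, r₂, orthantClamp]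
  simp only [Function.update_eq_self, hclamp] at h₀ h₁ h₂ h₃
  linarith

/-- Quadratic growth bound for the numerical Hamiltonian.
Under (g1), (g3), (g5), if `sup_x |g(x,0)| < ∞`, then there is `λ > 0` such that
`g(x,q) ≤ λ (1 + (q₁⁻)² + (q₂⁺)² + (q₃⁻)² + (q₄⁺)²)` for all `x, q`. -/
theorem numerical_Hamiltonian_growth_bound
    (g : Torus → (Fin 4 → ℝ) → ℝ) (gq : Torus → (Fin 4 → ℝ) → (Fin 4 → ℝ))
    (hg1 : Hg1 g) (hg3 : Hg3 g gq) (hg5 : Hg5 g gq)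
    (hbdd : BddAbove (Set.range fun x : Torus => |g x (fun _ => 0)|)) :
    ∃ lam : ℝ, 0 < lam ∧ ∀ (x : Torus) (q : Fin 4 → ℝ),
      g x q ≤ lam * (1 + (max (-(q 0)) 0) ^ 2 + (max (q 1) 0) ^ 2
        + (max (-(q 2)) 0) ^ 2 + (max (q 3) 0) ^ 2) := by
  obtain ⟨_, _, c3, c4, -, -, hc3, hc4, hgrowth⟩ := hg5
  obtain ⟨B, hB⟩ := hbdd
  have hg0 : ∀ x, g x 0 ≤ B := fun x => (le_abs_self _).trans (hB ⟨x, rfl⟩)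
  have hB0 : 0 ≤ B := (abs_nonneg _).trans (hB ⟨0, rfl⟩)
  refine ⟨B + 4 * c3 + 2 * c4 + 1, by positivity, ?_⟩
  intro x q
  set n := norm4 (orthantClamp q)
  have hn : 0 ≤ n := norm4_nonneg _
  have hgrad : ∀ r : Fin 4 → ℝ, (∀ i, |r i| ≤ |orthantClamp q i|) →
      ∀ i, |gq x r i| ≤ c3 * n + c4 := fun r hr i =>
    (abs_apply_le_norm4 _ i).trans <| (hgrowth x r).2.trans <|
      add_le_add_left (mul_le_mul_of_nonneg_left (norm4_le_norm4_of_abs_le hr) hc3.le) c4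
  have hpath := le_zero_add_sum_of_hasDerivAt_update (hg3.2.2 x) _ hgrad
  have hcoord : ∑ i, (c3 * n + c4) * |orthantClamp q i| ≤ 4 * ((c3 * n + c4) * n) := by
    simpa using sum_le_sum fun i (_ : i ∈ univ) => mul_le_mul_of_nonneg_left
      (abs_apply_le_norm4 (orthantClamp q) i) (by positivity : 0 ≤ c3 * n + c4)
  calc g x q ≤ (B + 4 * c3 + 2 * c4 + 1) * (1 + n ^ 2) := by
        nlinarith [hg1.le_orthantClamp x q, hg0 x, mul_nonneg hB0 (sq_nonneg n),
          mul_nonneg hc4.le (sq_nonneg (n - 1))]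
    _ = _ := by rw [sq_norm4_orthantClamp]; ring
end
end

section
/- Let ν > 0, Δt > 0, N_T a positive integer, and let (u^n)_{0≤n≤N_T} be grid functions on 𝕋²_h satisfying the discrete heat equation (u^{n+1}_{i,j} − u^n_{i,j})/Δt − ν(Δ_h u^{n+1})_{i,j} = f^n_{i,j} for all i,j and 0 ≤ n < N_T, where (f^n)_{0≤n<N_T} are given grid functions. Then for every bounded, nondecreasing C¹ function ψ : ℝ → ℝ: ν · h²Δt Σ_{n=0}^{N_T−1} Σ_{i,j} (D_h u^{n+1})_{i,j} · (D_h ψ(u^{n+1}))_{i,j} ≤ ‖ψ‖_∞ · ( ‖f‖_{L¹(Q_{h,Δt})} + ‖u⁰‖_{L¹(𝕋²_h)} + ‖u^{N_T}‖_{L¹(𝕋²_h)} ), where ψ(u^{n+1}) denotes the grid function (ψ(u^{n+1}_{i,j}))_{i,j} and ‖ψ‖_∞ = sup_{r∈ℝ} |ψ(r)|. -/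
/-!
Test the scheme at step `n` against `ψ(uⁿ⁺¹)`. Summation by parts on the torus turns
`-ν Δ_h uⁿ⁺¹ · ψ(uⁿ⁺¹)` into the energy density, so the energy is bounded by the sum of
`Δt fⁿ ψ(uⁿ⁺¹) - (uⁿ⁺¹ - uⁿ) ψ(uⁿ⁺¹)`. If `Ψ` is a primitive of `ψ`, monotonicity of `ψ`
(convexity of `Ψ`) gives `(uⁿ⁺¹ - uⁿ) ψ(uⁿ⁺¹) ≥ Ψ(uⁿ⁺¹) - Ψ(uⁿ)`, which telescopes in `n`,
and `|Ψ(r)| ≤ ‖ψ‖_∞ |r|`.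
-/

open Finset

noncomputable section

theorem sum_sub_div_mul_sub_div {G R : Type*} [AddCommGroup G] [Fintype G] [Field R]
    (a : G) (h : R) (v w : G → R) :
    ∑ x, (v (x + a) - v x) / h * ((w (x + a) - w x) / h)
      = ∑ x, (2 * v x - v (x + a) - v (x - a)) / h ^ 2 * w x := by
  have shift : ∑ x, (v (x + a) - v x) * w (x + a) = ∑ x, (v x - v (x - a)) * w x := by
    simpa using Equiv.sum_comp (Equiv.addRight a) fun x => (v x - v (x - a)) * w x
  calc ∑ x, (v (x + a) - v x) / h * ((w (x + a) - w x) / h)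
      = (∑ x, (v (x + a) - v x) * w (x + a) - ∑ x, (v (x + a) - v x) * w x) / h ^ 2 := by
        rw [← Finset.sum_sub_distrib, Finset.sum_div]
        exact Finset.sum_congr rfl fun x _ => by ring
    _ = ∑ x, (2 * v x - v (x + a) - v (x - a)) / h ^ 2 * w x := by
        rw [shift, ← Finset.sum_sub_distrib, Finset.sum_div]
        exact Finset.sum_congr rfl fun x _ => by ring

theorem sum_sum_D_mul_D_eq_sum_sum_neg_laph_mul {N : ℕ} [NeZero N] (v w : ZMod N → ZMod N → ℝ) :
    ∑ i, ∑ j, (D1 v i j * D1 w i j + D2 v i j * D2 w i j)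
      = ∑ i, ∑ j, -laph v i j * w i j := by
  simp only [Finset.sum_add_distrib]
  rw [Finset.sum_comm (f := fun i j => D1 v i j * D1 w i j)]
  have h1 := fun j => sum_sub_div_mul_sub_div 1 (gridh N) (v · j) (w · j)
  have h2 := fun i => sum_sub_div_mul_sub_div 1 (gridh N) (v i) (w i)
  beta_reduce at h1
  simp only [D1, D2, h1, h2]
  rw [Finset.sum_comm, ← Finset.sum_add_distrib]
  refine Finset.sum_congr rfl fun i _ => ?_
  rw [← Finset.sum_add_distrib]
  exact Finset.sum_congr rfl fun j _ => by simp only [laph]; ring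

def primitive (ψ : ℝ → ℝ) (r : ℝ) : ℝ := ∫ t in (0 : ℝ)..r, ψ t

theorem primitive_sub_primitive_le {ψ : ℝ → ℝ} (hψ : Monotone ψ) (a b : ℝ) :
    primitive ψ b - primitive ψ a ≤ ψ b * (b - a) := by
  have hint : ∀ x y : ℝ, IntervalIntegrable ψ MeasureTheory.volume x y :=
    fun _ _ => hψ.intervalIntegrable
  rw [primitive, primitive, intervalIntegral.integral_interval_sub_left (hint 0 b) (hint 0 a)]
  suffices 0 ≤ ∫ t in a..b, (ψ b - ψ t) by
    rwa [intervalIntegral.integral_sub intervalIntegrable_const (hint a b),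
      intervalIntegral.integral_const, smul_eq_mul, sub_nonneg, mul_comm] at this
  rcases le_total a b with hab | hba
  · exact intervalIntegral.integral_nonneg hab fun t ht => sub_nonneg.2 (hψ ht.2)
  · rw [intervalIntegral.integral_symm, ← intervalIntegral.integral_neg]
    exact intervalIntegral.integral_nonneg hba fun t ht => neg_nonneg.2 (sub_nonpos.2 (hψ ht.1))

theorem abs_primitive_le {ψ : ℝ → ℝ} {M : ℝ} (hM : ∀ r, |ψ r| ≤ M) (r : ℝ) :
    |primitive ψ r| ≤ M * |r| := by
  simpa [primitive] using
    intervalIntegral.norm_integral_le_of_norm_le_const (a := 0) (b := r) fun x _ =>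
      (Real.norm_eq_abs _).trans_le (hM x)

theorem neg_sum_sub_mul_le {ψ : ℝ → ℝ} {M : ℝ} (hψ : Monotone ψ) (hM : ∀ r, |ψ r| ≤ M)
    (x : ℕ → ℝ) (K : ℕ) :
    -∑ n ∈ Finset.range K, (x (n + 1) - x n) * ψ (x (n + 1)) ≤ M * (|x 0| + |x K|) := by
  calc -∑ n ∈ Finset.range K, (x (n + 1) - x n) * ψ (x (n + 1))
      ≤ -∑ n ∈ Finset.range K, (primitive ψ (x (n + 1)) - primitive ψ (x n)) :=
        neg_le_neg <| Finset.sum_le_sum fun n _ =>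
          (primitive_sub_primitive_le hψ _ _).trans_eq (mul_comm _ _)
    _ = primitive ψ (x 0) - primitive ψ (x K) := by
        rw [Finset.sum_range_sub (fun n => primitive ψ (x n))]; ring
    _ ≤ M * (|x 0| + |x K|) := by
        linarith [(le_abs_self _).trans (abs_primitive_le hM (x 0)),
          (neg_abs_le _).trans' (neg_le_neg (abs_primitive_le hM (x K)))]

theorem sum_mul_sub_mul_le {ψ : ℝ → ℝ} {M Δt : ℝ} (hψ : Monotone ψ) (hM : ∀ r, |ψ r| ≤ M)
    (hΔt : 0 ≤ Δt) (x g : ℕ → ℝ) (K : ℕ) :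
    ∑ n ∈ Finset.range K, (Δt * g n - (x (n + 1) - x n)) * ψ (x (n + 1))
      ≤ M * (Δt * ∑ n ∈ Finset.range K, |g n| + |x 0| + |x K|) := by
  have source : ∑ n ∈ Finset.range K, Δt * g n * ψ (x (n + 1))
      ≤ M * (Δt * ∑ n ∈ Finset.range K, |g n|) := by
    rw [Finset.mul_sum, Finset.mul_sum]
    refine Finset.sum_le_sum fun n _ => ?_
    calc Δt * g n * ψ (x (n + 1)) ≤ Δt * (|g n| * M) := by
          rw [mul_assoc]
          refine mul_le_mul_of_nonneg_left ((le_abs_self _).trans ?_) hΔt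
          rw [abs_mul]
          exact mul_le_mul_of_nonneg_left (hM _) (abs_nonneg _)
      _ = M * (Δt * |g n|) := by ring
  have split : ∑ n ∈ Finset.range K, (Δt * g n - (x (n + 1) - x n)) * ψ (x (n + 1))
      = ∑ n ∈ Finset.range K, Δt * g n * ψ (x (n + 1))
        - ∑ n ∈ Finset.range K, (x (n + 1) - x n) * ψ (x (n + 1)) := by
    rw [← Finset.sum_sub_distrib]; simp only [sub_mul]
  linarith [neg_sum_sub_mul_le hψ hM x K]

theorem heat_step_energy_eq {N : ℕ} [NeZero N] {ν Δt : ℝ} (hΔt : Δt ≠ 0)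
    (u₀ u₁ f w : ZMod N → ZMod N → ℝ)
    (heq : ∀ i j, (u₁ i j - u₀ i j) / Δt - ν * laph u₁ i j = f i j) :
    ν * (Δt * ∑ i, ∑ j, (D1 u₁ i j * D1 w i j + D2 u₁ i j * D2 w i j))
      = ∑ i, ∑ j, (Δt * f i j - (u₁ i j - u₀ i j)) * w i j := by
  rw [sum_sum_D_mul_D_eq_sum_sum_neg_laph_mul, Finset.mul_sum, Finset.mul_sum]
  refine Finset.sum_congr rfl fun i _ => ?_
  rw [Finset.mul_sum, Finset.mul_sum]
  refine Finset.sum_congr rfl fun j _ => ?_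
  rw [← heq i j]
  field_simp
  ring

theorem discrete_heat_energy_estimate_general (N NT : ℕ) [NeZero N]
    (ν Δt : ℝ) (hΔt : 0 < Δt)
    (u f : ℕ → ZMod N → ZMod N → ℝ)
    (heq : ∀ n < NT, ∀ i j,
      (u (n + 1) i j - u n i j) / Δt - ν * laph (u (n + 1)) i j = f n i j)
    (ψ : ℝ → ℝ) (hψmono : Monotone ψ)
    (hψbdd : BddAbove (Set.range fun r => |ψ r|)) :
    ν * ((gridh N) ^ 2 * Δt * ∑ n ∈ Finset.range NT, ∑ i, ∑ j,
        (D1 (u (n + 1)) i j * D1 (fun a b => ψ (u (n + 1) a b)) i j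
          + D2 (u (n + 1)) i j * D2 (fun a b => ψ (u (n + 1) a b)) i j))
      ≤ (⨆ r : ℝ, |ψ r|) *
          (Δt * ∑ n ∈ Finset.range NT, (gridh N) ^ 2 * ∑ i, ∑ j, |f n i j|
            + (gridh N) ^ 2 * ∑ i, ∑ j, |u 0 i j|
            + (gridh N) ^ 2 * ∑ i, ∑ j, |u NT i j|) := by
  set M := ⨆ r : ℝ, |ψ r|
  have hM : ∀ r, |ψ r| ≤ M := le_ciSup hψbdd
  have step := fun n (hn : n ∈ Finset.range NT) => heat_step_energy_eq hΔt.ne' (u n) (u (n + 1))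
    (f n) (fun a b => ψ (u (n + 1) a b)) (heq n (Finset.mem_range.1 hn))
  calc _ = (gridh N) ^ 2 * ∑ n ∈ Finset.range NT, ∑ i, ∑ j,
          (Δt * f n i j - (u (n + 1) i j - u n i j)) * ψ (u (n + 1) i j) := by
        rw [← Finset.sum_congr rfl step, ← Finset.mul_sum, ← Finset.mul_sum]
        ring
    _ = (gridh N) ^ 2 * ∑ i, ∑ j, ∑ n ∈ Finset.range NT,
          (Δt * f n i j - (u (n + 1) i j - u n i j)) * ψ (u (n + 1) i j) := by
        simp only [Finset.sum_comm (γ := ℕ)]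
    _ ≤ (gridh N) ^ 2 * ∑ i, ∑ j,
          M * (Δt * ∑ n ∈ Finset.range NT, |f n i j| + |u 0 i j| + |u NT i j|) := by
        gcongr with i _ j _
        exact sum_mul_sub_mul_le hψmono hM hΔt.le (u · i j) (f · i j) NT
    _ = _ := by
        simp only [mul_add, Finset.sum_add_distrib, Finset.mul_sum]
        simp only [Finset.sum_comm (α := ℕ), mul_left_comm (gridh N ^ 2)]

/-- Energy estimate for the discrete heat equation with `L¹` data.
If `(u^n)` solves the discrete heat equation with data `(f^n)`, then for every
bounded nondecreasing C¹ function `ψ`, the discrete energy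
`ν h²Δt Σ_n Σ_{i,j} (D_h u^{n+1})·(D_h ψ(u^{n+1}))` is bounded by
`‖ψ‖_∞ (‖f‖_{L¹} + ‖u⁰‖_{L¹} + ‖u^{N_T}‖_{L¹})`. -/
theorem discrete_heat_energy_estimate (N NT : ℕ) [NeZero N] (hNT : 0 < NT)
    (ν Δt : ℝ) (hν : 0 < ν) (hΔt : 0 < Δt)
    (u f : ℕ → ZMod N → ZMod N → ℝ)
    (heq : ∀ n < NT, ∀ i j,
      (u (n + 1) i j - u n i j) / Δt - ν * laph (u (n + 1)) i j = f n i j)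
    (ψ : ℝ → ℝ) (hψmono : Monotone ψ) (hψC1 : ContDiff ℝ 1 ψ)
    (hψbdd : BddAbove (Set.range fun r => |ψ r|)) :
    ν * ((gridh N) ^ 2 * Δt * ∑ n ∈ Finset.range NT, ∑ i, ∑ j,
        (D1 (u (n + 1)) i j * D1 (fun a b => ψ (u (n + 1) a b)) i j
          + D2 (u (n + 1)) i j * D2 (fun a b => ψ (u (n + 1) a b)) i j))
      ≤ (⨆ r : ℝ, |ψ r|) *
          (Δt * ∑ n ∈ Finset.range NT, (gridh N) ^ 2 * ∑ i, ∑ j, |f n i j|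
            + (gridh N) ^ 2 * ∑ i, ∑ j, |u 0 i j|
            + (gridh N) ^ 2 * ∑ i, ∑ j, |u NT i j|) :=
  discrete_heat_energy_estimate_general N NT ν Δt hΔt u f heq ψ hψmono hψbdd

end
end
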